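/- arXiv:math/0210023 — 8 statements merged into one kernel-verified Lean document; each statement's English description precedes it below -/
import Mathlib

section
/- Let k ≥ 1. Let b(n;k) be the number of words σ : Fin n → Fin k containing no occurrence of the pattern 1'-2-1'', i.e., no indices i < j < l such that σ(i) < σ(j) and σ(l) < σ(j). Then in the ring of formal power series ℚ[[x]], the generating function B_k(x) = Σ_{n≥0} b(n;k)·xⁿ satisfies B_k(x) = 1/(1−x)^{2k−1} − Σ_{j=1}^{k−1} x/(1−x)^{2j} (equivalently, (1−x)^{2k−1}·B_k(x) = 1 − Σ_{j=1}^{k−1} x·(1−x)^{2k−1−2j}). -/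
/-- A word `σ : Fin n → Fin k` avoids the partially ordered pattern 1'-2-1'':
there are no indices `i < j < l` with `σ i < σ j` and `σ l < σ j`. -/
def Avoids121 {n k : ℕ} (σ : Fin n → Fin k) : Prop :=
  ¬ ∃ i j l : Fin n, i < j ∧ j < l ∧ σ i < σ j ∧ σ l < σ j

/-- The generating function `B_k(x) = Σ_{n≥0} b(n;k) xⁿ` where `b(n;k)` is the number
of words `Fin n → Fin k` avoiding the pattern 1'-2-1''. -/
noncomputable def B (k : ℕ) : PowerSeries ℚ :=
  PowerSeries.mk fun n => (Nat.card {σ : Fin n → Fin k // Avoids121 σ} : ℚ)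

/-!
A word avoids 1'-2-1'' iff it weakly decreases up to a position of its minimum and weakly
increases from there on. An avoiding word over `Fin (k + 1)` that uses the letter `0` is coded,
after deleting its first `0`, by a monotone word over `2k + 1` letters: a letter `s` before that
`0` becomes `k - s < k` and a letter `s` after it becomes `k + s ≥ k`, so the deleted position is
the number of code letters below `k`. Avoiding words without `0` are avoiding words over `Fin k`.
Hence `b(N + 1; k + 1) = b(N + 1; k) + C(2k + N, 2k)`, i.e. `B_{k+1} = B_k + x / (1 - x)^{2k+1}`,
and the closed form follows by induction on `k`.
-/

open Finset

section Avoidance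
variable {n k m : ℕ} {σ : Fin n → Fin k}

theorem avoids121_comp_iff {f : Fin k → Fin m} (hf : StrictMono f) :
    Avoids121 (f ∘ σ) ↔ Avoids121 σ := by
  simp only [Avoids121, Function.comp_apply, hf.lt_iff_lt]

theorem Avoids121.antitoneOn_Iic (hσ : Avoids121 σ) {q : Fin n} (hq : ∀ i, σ q ≤ σ i) :
    AntitoneOn σ (Set.Iic q) := by
  intro x _ y hyq hxy
  by_contra! h
  have hyq : y < q := hyq.lt_of_ne (by rintro rfl; exact (hq x).not_gt h)
  exact hσ ⟨x, y, q, hxy.lt_of_ne (by rintro rfl; exact h.false), hyq, h, (hq x).trans_lt h⟩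

theorem Avoids121.monotoneOn_Ici (hσ : Avoids121 σ) {q : Fin n} (hq : ∀ i, σ q ≤ σ i) :
    MonotoneOn σ (Set.Ici q) := by
  intro x hqx y _ hxy
  by_contra! h
  have hqx : q < x := hqx.lt_of_ne' (by rintro rfl; exact (hq y).not_gt h)
  exact hσ ⟨q, x, y, hqx, hxy.lt_of_ne (by rintro rfl; exact h.false), (hq y).trans_lt h, h⟩

theorem avoids121_of_antitoneOn_of_monotoneOn {q : Fin n} (h₁ : AntitoneOn σ (Set.Iic q))
    (h₂ : MonotoneOn σ (Set.Ici q)) : Avoids121 σ := by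
  rintro ⟨i, j, l, hij, hjl, hi, hl⟩
  rcases le_total j q with hjq | hqj
  · exact (h₁ (hij.le.trans hjq) hjq hij.le).not_gt hi
  · exact (h₂ hqj (hqj.trans hjl.le) hjl.le).not_gt hl

end Avoidance

theorem lt_card_filter_iff_of_antitone {N : ℕ} {p : Fin N → Prop} [DecidablePred p]
    (hp : Antitone p) (i : Fin N) : (i : ℕ) < #{j | p j} ↔ p i := by
  constructor
  · intro h
    by_contra hi
    have hsub : ({j | p j} : Finset (Fin N)) ⊆ Iio i := fun j hj => by
      simp only [mem_filter, mem_univ, true_and, mem_Iio] at hj ⊢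
      by_contra! hij
      exact hi (hp hij hj)
    have := card_le_card hsub
    rw [Fin.card_Iio] at this
    omega
  · intro hi
    have hsub : Iic i ⊆ ({j | p j} : Finset (Fin N)) := fun j hj => by
      simp only [mem_filter, mem_univ, true_and, mem_Iic] at hj ⊢
      exact hp hj hi
    have := card_le_card hsub
    rw [Fin.card_Iic] at this
    omega

theorem card_filter_castSucc_lt {N : ℕ} (q : Fin (N + 1)) :
    #{i : Fin N | i.castSucc < q} = q := by
  rw [← Fin.card_Iio q, ← card_map Fin.castSuccEmb]
  congr 1
  ext x
  simp only [mem_map, mem_filter, mem_univ, true_and, Fin.coe_castSuccEmb, mem_Iio]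
  constructor
  · rintro ⟨i, hi, rfl⟩
    exact hi
  · intro hx
    exact ⟨x.castPred (Fin.ne_last_of_lt hx), hx, Fin.castSucc_castPred _ _⟩

section ZeroValley
variable {N k : ℕ}

def valleyCode (σ : Fin (N + 1) → Fin (k + 1)) (q : Fin (N + 1)) (i : Fin N) :
    Fin (2 * k + 1) :=
  ⟨if i.castSucc < q then k - σ (q.succAbove i) else k + σ (q.succAbove i), by
    have := (σ (q.succAbove i)).isLt
    split_ifs <;> omega⟩

def letterOfCode (k : ℕ) (v : Fin (2 * k + 1)) : Fin (k + 1) :=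
  ⟨if (v : ℕ) < k then k - v else v - k, by have := v.isLt; split_ifs <;> omega⟩

theorem val_letterOfCode (v : Fin (2 * k + 1)) :
    (letterOfCode k v : ℕ) = if (v : ℕ) < k then k - v else v - k := rfl

def cutPoint (g : Fin N → Fin (2 * k + 1)) : Fin (N + 1) :=
  ⟨#{i | (g i : ℕ) < k}, Nat.lt_succ_of_le ((card_filter_le _ _).trans_eq (card_fin N))⟩

def valleyOfCode (g : Fin N → Fin (2 * k + 1)) : Fin (N + 1) → Fin (k + 1) :=
  Fin.insertNth (cutPoint g) 0 (letterOfCode k ∘ g)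

theorem valleyCode_monotone {σ : Fin (N + 1) → Fin (k + 1)} (hσ : Avoids121 σ)
    {q : Fin (N + 1)} (hq : σ q = 0) : Monotone (valleyCode σ q) := by
  have hmin : ∀ i, σ q ≤ σ i := fun i => hq ▸ Fin.zero_le _
  intro i j hij
  have hij' : q.succAbove i ≤ q.succAbove j := Fin.succAbove_le_succAbove_iff.2 hij
  simp only [valleyCode, Fin.mk_le_mk]
  split_ifs with hi hj hj
  · have := hσ.antitoneOn_Iic hmin (a := q.succAbove i) (b := q.succAbove j)
      ((Fin.succAbove_lt_iff_castSucc_lt _ _).2 hi).le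
      ((Fin.succAbove_lt_iff_castSucc_lt _ _).2 hj).le hij'
    rw [Fin.le_def] at this
    omega
  · omega
  · exact absurd (lt_of_le_of_lt (Fin.castSucc_le_castSucc_iff.2 hij) hj) hi
  · have := hσ.monotoneOn_Ici hmin (a := q.succAbove i) (b := q.succAbove j)
      (not_lt.1 (mt (Fin.succAbove_lt_iff_castSucc_lt _ _).1 hi))
      (not_lt.1 (mt (Fin.succAbove_lt_iff_castSucc_lt _ _).1 hj)) hij'
    rw [Fin.le_def] at this
    omega

section Encode
variable {σ : Fin (N + 1) → Fin (k + 1)} {q : Fin (N + 1)}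

theorem val_valleyCode_lt_iff (hfirst : ∀ x < q, σ x ≠ 0) (i : Fin N) :
    (valleyCode σ q i : ℕ) < k ↔ i.castSucc < q := by
  simp only [valleyCode]
  split_ifs with h
  · have := hfirst _ ((Fin.succAbove_lt_iff_castSucc_lt _ _).2 h)
    rw [Ne, Fin.ext_iff] at this
    simp only [Fin.val_zero] at this
    omega
  · omega

theorem cutPoint_valleyCode (hfirst : ∀ x < q, σ x ≠ 0) : cutPoint (valleyCode σ q) = q := by
  ext
  simp only [cutPoint, val_valleyCode_lt_iff hfirst]
  exact card_filter_castSucc_lt q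

theorem valleyOfCode_valleyCode (hq : σ q = 0) (hfirst : ∀ x < q, σ x ≠ 0) :
    valleyOfCode (valleyCode σ q) = σ := by
  conv_rhs => rw [← Fin.insertNth_self_removeNth q σ, hq]
  rw [valleyOfCode, cutPoint_valleyCode hfirst]
  congr 1
  funext i
  ext
  have hlt := val_valleyCode_lt_iff hfirst i
  simp only [Function.comp_apply, val_letterOfCode, Fin.removeNth_apply, valleyCode] at hlt ⊢
  split_ifs at hlt ⊢ <;> omega

end Encode

section Decode
variable {g : Fin N → Fin (2 * k + 1)}

theorem castSucc_lt_cutPoint_iff (hg : Monotone g) (i : Fin N) :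
    i.castSucc < cutPoint g ↔ (g i : ℕ) < k :=
  Fin.lt_def.trans <| lt_card_filter_iff_of_antitone (p := fun j => (g j : ℕ) < k)
    (fun _ _ hab h => (Fin.le_def.1 (hg hab)).trans_lt h) i

theorem valleyOfCode_cutPoint : valleyOfCode g (cutPoint g) = 0 :=
  Fin.insertNth_apply_same _ _ _

theorem valleyOfCode_succAbove (i : Fin N) :
    valleyOfCode g ((cutPoint g).succAbove i) = letterOfCode k (g i) :=
  Fin.insertNth_apply_succAbove _ _ _ _

theorem valleyOfCode_ne_zero (hg : Monotone g) {x : Fin (N + 1)} (hx : x < cutPoint g) :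
    valleyOfCode g x ≠ 0 := by
  obtain ⟨i, rfl⟩ := Fin.exists_succAbove_eq hx.ne
  have hi := (castSucc_lt_cutPoint_iff hg i).1 ((Fin.succAbove_lt_iff_castSucc_lt _ _).1 hx)
  rw [valleyOfCode_succAbove, Ne, Fin.ext_iff, val_letterOfCode, if_pos hi]
  simp only [Fin.val_zero]
  omega

theorem avoids121_valleyOfCode (hg : Monotone g) : Avoids121 (valleyOfCode g) := by
  refine avoids121_of_antitoneOn_of_monotoneOn (q := cutPoint g) ?_ ?_
  · intro x _ y (hy : y ≤ cutPoint g) hxy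
    rcases hy.eq_or_lt with rfl | hy
    · rw [valleyOfCode_cutPoint]
      exact Fin.zero_le _
    obtain ⟨j, rfl⟩ := Fin.exists_succAbove_eq hy.ne
    obtain ⟨i, rfl⟩ := Fin.exists_succAbove_eq (hxy.trans_lt hy).ne
    have hj := (castSucc_lt_cutPoint_iff hg j).1 ((Fin.succAbove_lt_iff_castSucc_lt _ _).1 hy)
    have hgij := Fin.le_def.1 (hg (Fin.succAbove_le_succAbove_iff.1 hxy))
    rw [valleyOfCode_succAbove, valleyOfCode_succAbove, Fin.le_def, val_letterOfCode,
      val_letterOfCode]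
    split_ifs <;> omega
  · intro x (hx : cutPoint g ≤ x) y _ hxy
    rcases hx.eq_or_lt with rfl | hx
    · rw [valleyOfCode_cutPoint]
      exact Fin.zero_le _
    obtain ⟨i, rfl⟩ := Fin.exists_succAbove_eq hx.ne'
    obtain ⟨j, rfl⟩ := Fin.exists_succAbove_eq (hx.trans_le hxy).ne'
    have hi : ¬ (g i : ℕ) < k := fun h => hx.not_gt
      ((Fin.succAbove_lt_iff_castSucc_lt _ _).2 ((castSucc_lt_cutPoint_iff hg i).2 h))
    have hgij := Fin.le_def.1 (hg (Fin.succAbove_le_succAbove_iff.1 hxy))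
    rw [valleyOfCode_succAbove, valleyOfCode_succAbove, Fin.le_def, val_letterOfCode,
      val_letterOfCode]
    split_ifs <;> omega

theorem valleyCode_valleyOfCode (hg : Monotone g) :
    valleyCode (valleyOfCode g) (cutPoint g) = g := by
  funext i
  ext
  have hi := castSucc_lt_cutPoint_iff hg i
  simp only [valleyCode, valleyOfCode_succAbove, val_letterOfCode]
  split_ifs at hi ⊢ <;> omega

end Decode

end ZeroValley

def monotoneEquivSym (α : Type*) [LinearOrder α] (n : ℕ) :
    {f : Fin n → α // Monotone f} ≃ Sym α n where
  toFun f := ⟨List.ofFn f.1, by simp⟩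
  invFun s := ⟨(s.1.sort (· ≤ ·)).get ∘ Fin.cast (by simp),
    (Multiset.pairwise_sort s.1 (· ≤ ·)).sortedLE.monotone_get.comp
      fun _ _ => (Fin.cast_le_cast _).2⟩
  left_inv f := by
    have hsort : (List.ofFn f.1 : Multiset α).sort = List.ofFn f.1 :=
      List.Perm.eq_of_sortedLE (Multiset.pairwise_sort _ _).sortedLE
        (List.sortedLE_ofFn_iff.2 f.2) (Multiset.coe_eq_coe.1 (Multiset.sort_eq _ _))
    ext i
    simp only [Function.comp_apply, List.get_of_eq hsort, List.get_ofFn]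
    rfl
  right_inv s := by
    ext1
    show ((List.ofFn _ : List α) : Multiset α) = s.1
    rw [← Multiset.sort_eq s.1 (· ≤ ·)]
    congr 1
    exact List.ext_get (by simp) fun i _ _ => by simp only [List.get_ofFn]; rfl

theorem card_monotone_fin (m n : ℕ) :
    Nat.card {f : Fin n → Fin m // Monotone f} = (m + n - 1).choose n := by
  rw [Nat.card_congr (monotoneEquivSym _ n), Nat.card_eq_fintype_card, Sym.card_sym_eq_choose,
    Fintype.card_fin]

def zeroValleyEquiv (N k : ℕ) :
    {σ : Fin (N + 1) → Fin (k + 1) // Avoids121 σ ∧ ∃ i, σ i = 0} ≃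
      {g : Fin N → Fin (2 * k + 1) // Monotone g} where
  toFun σ := ⟨valleyCode σ.1 (Fin.find _ σ.2.2), valleyCode_monotone σ.2.1 (Fin.find_spec σ.2.2)⟩
  invFun g := ⟨valleyOfCode g.1, avoids121_valleyOfCode g.2, _, valleyOfCode_cutPoint⟩
  left_inv σ := Subtype.ext <|
    valleyOfCode_valleyCode (Fin.find_spec σ.2.2) fun _ => Fin.find_min σ.2.2
  right_inv g := by
    have hfind : Fin.find (valleyOfCode g.1 · = 0) ⟨_, valleyOfCode_cutPoint⟩ = cutPoint g.1 :=
      (Fin.find_eq_iff _).2 ⟨valleyOfCode_cutPoint, fun _ hx => valleyOfCode_ne_zero g.2 hx⟩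
    exact Subtype.ext (by simp only [hfind]; exact valleyCode_valleyOfCode g.2)

def nonzeroValleyEquiv (n k : ℕ) :
    {σ : Fin n → Fin (k + 1) // Avoids121 σ ∧ ∀ i, σ i ≠ 0} ≃
      {τ : Fin n → Fin k // Avoids121 τ} where
  toFun σ := ⟨fun i => (σ.1 i).pred (σ.2.2 i), (avoids121_comp_iff Fin.strictMono_succ).1 <| by
    convert σ.2.1
    ext
    simp⟩
  invFun τ := ⟨Fin.succ ∘ τ.1, (avoids121_comp_iff Fin.strictMono_succ).2 τ.2,
    fun _ => Fin.succ_ne_zero _⟩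
  left_inv σ := by ext; simp
  right_inv τ := by ext; simp

theorem card_avoids121_succ (n k : ℕ) :
    Nat.card {σ : Fin n → Fin (k + 1) // Avoids121 σ} =
      Nat.card {σ : Fin n → Fin k // Avoids121 σ} +
        Nat.card {σ : Fin n → Fin (k + 1) // Avoids121 σ ∧ ∃ i, σ i = 0} := by
  have hsplit : {σ : Fin n → Fin (k + 1) // Avoids121 σ} ≃
      {σ // Avoids121 σ ∧ ∃ i, σ i = 0} ⊕ {σ // Avoids121 σ ∧ ∀ i, σ i ≠ 0} :=
    (Equiv.sumCompl fun σ : {σ // Avoids121 σ} => ∃ i, σ.1 i = 0).symm.trans <|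
      .sumCongr (.subtypeSubtypeEquivSubtypeInter (fun σ => Avoids121 σ) fun σ => ∃ i, σ i = 0)
        ((Equiv.subtypeSubtypeEquivSubtypeInter (fun σ => Avoids121 σ)
          fun σ => ¬∃ i, σ i = 0).trans (.subtypeEquivRight fun _ => by simp))
  rw [Nat.card_congr (hsplit.trans ((Equiv.refl _).sumCongr (nonzeroValleyEquiv n k))),
    Nat.card_sum, add_comm]

theorem card_avoids121_length_zero (k : ℕ) : Nat.card {σ : Fin 0 → Fin k // Avoids121 σ} = 1 :=
  Nat.card_eq_one_iff_unique.2 ⟨inferInstance, ⟨⟨Fin.elim0, fun ⟨i, _⟩ => i.elim0⟩⟩⟩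

open PowerSeries

theorem B_zero : B 0 = 1 := by
  ext (_ | n)
  · simp [B, card_avoids121_length_zero]
  · simp [B]

theorem B_succ (k : ℕ) : B (k + 1) = B k + X * (invOneSubPow ℚ (2 * k + 1) : ℚ⟦X⟧) := by
  ext (_ | N)
  · simp [B, card_avoids121_length_zero]
  · rw [map_add, coeff_succ_X_mul, invOneSubPow_val_succ_eq_mk_add_choose]
    simp only [B, coeff_mk, card_avoids121_succ, Nat.card_congr (zeroValleyEquiv N k),
      card_monotone_fin, Nat.cast_add]
    rw [show 2 * k + 1 + N - 1 = 2 * k + N by omega, Nat.choose_symm_add]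

theorem one_sub_X_pow_mul_invOneSubPow (d : ℕ) :
    (1 - X : ℚ⟦X⟧) ^ d * (invOneSubPow ℚ d : ℚ⟦X⟧) = 1 := by
  simpa using one_sub_pow_add_mul_invOneSubPow_val_eq_one_sub_pow ℚ 0 d

theorem one_sub_X_pow_mul_B_succ (K : ℕ) :
    (1 - X) ^ (2 * K + 1) * B (K + 1) = 1 - ∑ i ∈ range K, X * (1 - X) ^ (2 * i + 1) := by
  induction K with
  | zero =>
    rw [B_succ, B_zero]
    linear_combination X * one_sub_X_pow_mul_invOneSubPow (2 * 0 + 1)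
  | succ K ih =>
    rw [B_succ, sum_range_succ']
    have hshift : ∑ i ∈ range K, X * (1 - X : ℚ⟦X⟧) ^ (2 * (i + 1) + 1) =
        (1 - X) ^ 2 * ∑ i ∈ range K, X * (1 - X) ^ (2 * i + 1) := by
      rw [mul_sum]
      exact sum_congr rfl fun i _ => by ring
    rw [hshift]
    linear_combination (1 - X) ^ 2 * ih + X * one_sub_X_pow_mul_invOneSubPow (2 * (K + 1) + 1)

theorem stmt0 (k : ℕ) (hk : 1 ≤ k) :
    (1 - PowerSeries.X) ^ (2 * k - 1) * B k =
      1 - ∑ j ∈ Finset.Icc 1 (k - 1),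
        (PowerSeries.X : PowerSeries ℚ) * (1 - PowerSeries.X) ^ (2 * k - 1 - 2 * j) := by
  obtain ⟨K, rfl⟩ := Nat.exists_eq_add_of_le' hk
  rw [show 2 * (K + 1) - 1 = 2 * K + 1 by omega, one_sub_X_pow_mul_B_succ, add_tsub_cancel_right]
  congr 1
  refine sum_nbij' (K - ·) (K - ·) ?_ ?_ ?_ ?_ fun i hi => ?_
  · intro i hi; simp only [mem_range, mem_Icc] at hi ⊢; omega
  · intro j hj; simp only [mem_range, mem_Icc] at hj ⊢; omega
  · intro i hi; simp only [mem_range] at hi; omega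
  · intro j hj; simp only [mem_Icc] at hj; omega
  · rw [mem_range] at hi
    rw [show 2 * K + 1 - 2 * (K - i) = 2 * i + 1 by omega]
end

section
/- Let k ≥ 1 and let b(n;k) be the number of words σ : Fin n → Fin k with no indices i < j < l such that σ(i) < σ(j) and σ(l) < σ(j). Then b(0;k) = 1, b(1;k) = k, and for all n ≥ 2, b(n;k) − 2·b(n−1;k) + b(n−2;k) = b(n;k−1). -/
/-- `b n k` is the number of words `Fin n → Fin k` avoiding the pattern 1'-2-1''. -/
noncomputable def b (n k : ℕ) : ℕ := Nat.card {σ : Fin n → Fin k // Avoids121 σ}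

open Classical in
lemma card_subtype_split {α : Type*} [Finite α] (P Q : α → Prop) :
    Nat.card {x // P x} = Nat.card {x // P x ∧ Q x} + Nat.card {x // P x ∧ ¬ Q x} := by
  rw [← Nat.card_sum]
  apply Nat.card_congr
  refine Equiv.symm ?_
  calc ({x // P x ∧ Q x} ⊕ {x // P x ∧ ¬ Q x})
      ≃ ({x : {y // P y} // Q x.1} ⊕ {x : {y // P y} // ¬ Q x.1}) :=
        Equiv.sumCongr
          (Equiv.subtypeSubtypeEquivSubtypeInter P Q).symm
          (Equiv.subtypeSubtypeEquivSubtypeInter P (fun y => ¬ Q y)).symm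
    _ ≃ {y // P y} := Equiv.sumCompl _

lemma avoids_tail {n k : ℕ} {σ : Fin (n + 1) → Fin k} (h : Avoids121 σ) :
    Avoids121 (Fin.tail σ) := by
  rintro ⟨i, j, l, hij, hjl, h1, h2⟩
  exact h ⟨i.succ, j.succ, l.succ, Fin.succ_lt_succ_iff.2 hij,
    Fin.succ_lt_succ_iff.2 hjl, h1, h2⟩

lemma avoids_cons_last {n k : ℕ} {τ : Fin n → Fin (k + 1)} (h : Avoids121 τ) :
    Avoids121 (Fin.cons (Fin.last k) τ) := by
  rintro ⟨i, j, l, hij, hjl, h1, h2⟩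
  have hi0 : i ≠ 0 := by
    rintro rfl
    simp only [Fin.cons_zero] at h1
    exact absurd h1 (Fin.not_lt.2 (Fin.le_last _))
  have hj0 : j ≠ 0 := Fin.pos_iff_ne_zero.1 (lt_of_le_of_lt (Fin.zero_le i) hij)
  have hl0 : l ≠ 0 := Fin.pos_iff_ne_zero.1 (lt_of_le_of_lt (Fin.zero_le j) hjl)
  obtain ⟨i', rfl⟩ := Fin.exists_succ_eq.2 hi0
  obtain ⟨j', rfl⟩ := Fin.exists_succ_eq.2 hj0
  obtain ⟨l', rfl⟩ := Fin.exists_succ_eq.2 hl0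
  simp only [Fin.cons_succ] at h1 h2
  exact h ⟨i', j', l', Fin.succ_lt_succ_iff.1 hij, Fin.succ_lt_succ_iff.1 hjl, h1, h2⟩

lemma avoids_init {n k : ℕ} {σ : Fin (n + 1) → Fin k} (h : Avoids121 σ) :
    Avoids121 (Fin.init σ) := by
  rintro ⟨i, j, l, hij, hjl, h1, h2⟩
  exact h ⟨i.castSucc, j.castSucc, l.castSucc, Fin.castSucc_lt_castSucc_iff.2 hij,
    Fin.castSucc_lt_castSucc_iff.2 hjl, h1, h2⟩

lemma avoids_snoc_last {n k : ℕ} {τ : Fin n → Fin (k + 1)} (h : Avoids121 τ) :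
    Avoids121 (Fin.snoc τ (Fin.last k)) := by
  rintro ⟨i, j, l, hij, hjl, h1, h2⟩
  have hl : l ≠ Fin.last n := by
    rintro rfl
    simp only [Fin.snoc_last] at h2
    exact absurd h2 (Fin.not_lt.2 (Fin.le_last _))
  have hj : j ≠ Fin.last n := Fin.ne_last_of_lt hjl
  have hi : i ≠ Fin.last n := Fin.ne_last_of_lt hij
  obtain ⟨i', rfl⟩ : ∃ a, Fin.castSucc a = i := ⟨i.castPred hi, Fin.castSucc_castPred _ _⟩
  obtain ⟨j', rfl⟩ : ∃ a, Fin.castSucc a = j := ⟨j.castPred hj, Fin.castSucc_castPred _ _⟩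
  obtain ⟨l', rfl⟩ : ∃ a, Fin.castSucc a = l := ⟨l.castPred hl, Fin.castSucc_castPred _ _⟩
  simp only [Fin.snoc_castSucc] at h1 h2
  exact h ⟨i', j', l', Fin.castSucc_lt_castSucc_iff.1 hij,
    Fin.castSucc_lt_castSucc_iff.1 hjl, h1, h2⟩

/-- Peeling a top letter from the front. -/
noncomputable def consEquiv (n k : ℕ) :
    {σ : Fin (n + 1) → Fin (k + 1) // Avoids121 σ ∧ σ 0 = Fin.last k} ≃
      {τ : Fin n → Fin (k + 1) // Avoids121 τ} where
  toFun x := ⟨Fin.tail x.1, avoids_tail x.2.1⟩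
  invFun y := ⟨Fin.cons (Fin.last k) y.1, avoids_cons_last y.2, Fin.cons_zero _ _⟩
  left_inv x := Subtype.ext (by
    conv_rhs => rw [← Fin.cons_self_tail x.1]
    rw [x.2.2])
  right_inv y := Subtype.ext (by simp [Fin.tail_cons])

/-- Peeling a top letter from the back, keeping track of the first letter. -/
noncomputable def snocEquiv (n k : ℕ) :
    {σ : Fin (n + 2) → Fin (k + 1) //
        (Avoids121 σ ∧ σ 0 ≠ Fin.last k) ∧ σ (Fin.last (n + 1)) = Fin.last k} ≃
      {σ : Fin (n + 1) → Fin (k + 1) // Avoids121 σ ∧ σ 0 ≠ Fin.last k} where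
  toFun x := ⟨Fin.init x.1, avoids_init x.2.1.1, by
    have : Fin.init x.1 0 = x.1 0 := rfl
    rw [this]; exact x.2.1.2⟩
  invFun y := ⟨Fin.snoc y.1 (Fin.last k), ⟨avoids_snoc_last y.2.1, by
      have : (Fin.snoc y.1 (Fin.last k) : Fin (n + 2) → Fin (k + 1)) 0 = y.1 0 := by
        have h0 : (0 : Fin (n + 2)) = Fin.castSucc 0 := rfl
        rw [h0, Fin.snoc_castSucc]
      rw [this]; exact y.2.2⟩, Fin.snoc_last _ _⟩
  left_inv x := Subtype.ext (by
    conv_rhs => rw [← Fin.snoc_init_self x.1]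
    rw [x.2.2])
  right_inv y := Subtype.ext (by simp [Fin.init_snoc])

lemma all_lt_last {n k : ℕ} {σ : Fin (n + 1) → Fin (k + 1)} (h : Avoids121 σ)
    (h0 : σ 0 ≠ Fin.last k) (hl : σ (Fin.last n) ≠ Fin.last k) (j : Fin (n + 1)) :
    σ j ≠ Fin.last k := by
  intro hj
  rcases eq_or_ne j 0 with rfl | hj0
  · exact h0 hj
  rcases eq_or_ne j (Fin.last n) with rfl | hjn
  · exact hl hj
  refine h ⟨0, j, Fin.last n, Fin.pos_iff_ne_zero.2 hj0, Fin.lt_last_iff_ne_last.2 hjn, ?_, ?_⟩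
  · rw [hj]; exact Fin.lt_last_iff_ne_last.2 h0
  · rw [hj]; exact Fin.lt_last_iff_ne_last.2 hl

/-- Words avoiding the pattern whose first and last letters are below the top letter
use only the bottom `k` letters. -/
noncomputable def shrinkEquiv (n k : ℕ) :
    {σ : Fin (n + 1) → Fin (k + 1) //
        (Avoids121 σ ∧ σ 0 ≠ Fin.last k) ∧ σ (Fin.last n) ≠ Fin.last k} ≃
      {w : Fin (n + 1) → Fin k // Avoids121 w} where
  toFun x := ⟨fun j => (x.1 j).castPred (all_lt_last x.2.1.1 x.2.1.2 x.2.2 j), by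
    rintro ⟨i, j, l, hij, hjl, h1, h2⟩
    rw [Fin.castPred_lt_castPred_iff] at h1 h2
    exact x.2.1.1 ⟨i, j, l, hij, hjl, h1, h2⟩⟩
  invFun y := ⟨fun j => (y.1 j).castSucc, ⟨by
      rintro ⟨i, j, l, hij, hjl, h1, h2⟩
      rw [Fin.castSucc_lt_castSucc_iff] at h1 h2
      exact y.2 ⟨i, j, l, hij, hjl, h1, h2⟩,
    Fin.ne_last_of_lt (Fin.castSucc_lt_last _)⟩, Fin.ne_last_of_lt (Fin.castSucc_lt_last _)⟩
  left_inv x := Subtype.ext (by funext j; simp [Fin.castSucc_castPred])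
  right_inv y := Subtype.ext (by funext j; simp [Fin.castPred_castSucc])

lemma L1 (n k : ℕ) :
    b (n + 1) (k + 1) = b n (k + 1) +
      Nat.card {σ : Fin (n + 1) → Fin (k + 1) // Avoids121 σ ∧ σ 0 ≠ Fin.last k} := by
  rw [b, card_subtype_split (Avoids121 ·) (fun σ => σ 0 = Fin.last k)]
  congr 1
  exact Nat.card_congr (consEquiv n k)

lemma L2 (n k : ℕ) :
    Nat.card {σ : Fin (n + 2) → Fin (k + 1) // Avoids121 σ ∧ σ 0 ≠ Fin.last k} =
      Nat.card {σ : Fin (n + 1) → Fin (k + 1) // Avoids121 σ ∧ σ 0 ≠ Fin.last k} +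
        b (n + 2) k := by
  rw [card_subtype_split (fun σ => Avoids121 σ ∧ σ 0 ≠ Fin.last k)
    (fun σ => σ (Fin.last (n + 1)) = Fin.last k)]
  congr 1
  · exact Nat.card_congr (snocEquiv n k)
  · exact Nat.card_congr (shrinkEquiv (n + 1) k)

lemma b_zero (k : ℕ) : b 0 k = 1 := by
  haveI : Unique {σ : Fin 0 → Fin k // Avoids121 σ} :=
    { default := ⟨fun i => i.elim0, by rintro ⟨i, -⟩; exact i.elim0⟩
      uniq := fun x => Subtype.ext (funext fun i => i.elim0) }
  exact Nat.card_unique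

lemma b_one (k : ℕ) : b 1 k = k := by
  have h : ∀ σ : Fin 1 → Fin k, Avoids121 σ := by
    rintro σ ⟨i, j, l, hij, hjl, -⟩
    have hi := i.2
    have hj := j.2
    rw [Fin.lt_def] at hij hjl
    omega
  rw [b]
  rw [Nat.card_congr ((Equiv.subtypeUnivEquiv h).trans (Equiv.funUnique (Fin 1) (Fin k)))]
  simp

theorem stmt1 (k : ℕ) (hk : 1 ≤ k) :
    b 0 k = 1 ∧ b 1 k = k ∧
      ∀ n : ℕ, 2 ≤ n →
        b n k + b (n - 2) k = 2 * b (n - 1) k + b n (k - 1) := by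
  obtain ⟨k, rfl⟩ : ∃ k', k = k' + 1 := ⟨k - 1, by omega⟩
  refine ⟨b_zero _, b_one _, ?_⟩
  intro n hn
  obtain ⟨m, rfl⟩ : ∃ m, n = m + 2 := ⟨n - 2, by omega⟩
  have e1 : m + 2 - 1 = m + 1 := by omega
  have h1 : b (m + 2) (k + 1) = b (m + 1) (k + 1) +
      Nat.card {σ : Fin (m + 2) → Fin (k + 1) // Avoids121 σ ∧ σ 0 ≠ Fin.last k} := L1 (m + 1) k
  have h2 := L1 m k
  have h3 : Nat.card {σ : Fin (m + 2) → Fin (k + 1) // Avoids121 σ ∧ σ 0 ≠ Fin.last k} =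
      Nat.card {σ : Fin (m + 1) → Fin (k + 1) // Avoids121 σ ∧ σ 0 ≠ Fin.last k} +
        b (m + 2) k := L2 m k
  simp only [Nat.add_sub_cancel, e1]
  generalize Nat.card {σ : Fin (m + 2) → Fin (k + 1) // Avoids121 σ ∧ σ 0 ≠ Fin.last k} = c2
    at h1 h3
  generalize Nat.card {σ : Fin (m + 1) → Fin (k + 1) // Avoids121 σ ∧ σ 0 ≠ Fin.last k} = c1
    at h2 h3
  omega
end

section
/- Let p : Fin m → Fin ℓ be a nonempty subword pattern (m ≥ 1) and k ≥ 1. Let a_p(n;k) be the number of k-ary words of length n avoiding p, and let a*_p(n;k) be the number of k-ary words σ of length n that quasi-avoid p, i.e., σ has exactly one occurrence of p and that occurrence is at position n − m. Then for all n ≥ 1, a*_p(n;k) = k·a_p(n−1;k) − a_p(n;k); equivalently, in ℚ[[x]], A*_p(x;k) = (k·x − 1)·A_p(x;k) + 1, where A*_p(x;k) = Σ_{n≥0} a*_p(n;k)·xⁿ and A_p(x;k) = Σ_{n≥0} a_p(n;k)·xⁿ. -/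
/-!
Deleting the last letter of a word `σ` of length `n + 1` destroys exactly the occurrences of `p`
that occupy its last `m` positions. Hence `Fin.init σ` avoids `p` iff `σ` avoids or quasi-avoids
`p`, and these two cases are disjoint. Counting the words whose prefix avoids `p` as pairs
(prefix, last letter) gives `a*_p(n+1) + a_p(n+1) = k · a_p(n)`, which together with
`a*_p(0) + a_p(0) = 1` is the coefficientwise form of the power series identity.
-/

/-- A word `σ : Fin n → Fin k` has an occurrence of the subword pattern `p : Fin m → Fin l`
at position `i` if `i + m ≤ n` and the corresponding letters are order-isomorphic to `p`. -/
def OccursAt {m l n k : ℕ} (p : Fin m → Fin l) (σ : Fin n → Fin k) (i : ℕ) : Prop :=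
  ∃ h : i + m ≤ n, ∀ a b : Fin m,
    (σ ⟨i + a, lt_of_lt_of_le (Nat.add_lt_add_left a.isLt i) h⟩ <
      σ ⟨i + b, lt_of_lt_of_le (Nat.add_lt_add_left b.isLt i) h⟩) ↔ p a < p b

/-- `σ` avoids the subword pattern `p`. -/
def AvoidsPat {m l n k : ℕ} (p : Fin m → Fin l) (σ : Fin n → Fin k) : Prop :=
  ∀ i : ℕ, ¬ OccursAt p σ i

/-- `σ` quasi-avoids `p`: it has exactly one occurrence of `p`, occupying the last `m`
positions, i.e. at position `n - m`. -/
def QuasiAvoids {m l n k : ℕ} (p : Fin m → Fin l) (σ : Fin n → Fin k) : Prop :=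
  OccursAt p σ (n - m) ∧ ∀ i : ℕ, OccursAt p σ i → i = n - m

/-- The number of words `Fin n → Fin k` avoiding `p`. -/
noncomputable def aPat {m l : ℕ} (p : Fin m → Fin l) (n k : ℕ) : ℕ :=
  Nat.card {σ : Fin n → Fin k // AvoidsPat p σ}

/-- The number of words `Fin n → Fin k` quasi-avoiding `p`. -/
noncomputable def aStarPat {m l : ℕ} (p : Fin m → Fin l) (n k : ℕ) : ℕ :=
  Nat.card {σ : Fin n → Fin k // QuasiAvoids p σ}

section Words

variable {m l n k : ℕ} (p : Fin m → Fin l)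

theorem occursAt_init_iff (σ : Fin (n + 1) → Fin k) {i : ℕ} (h : i + m ≤ n) :
    OccursAt p (Fin.init σ) i ↔ OccursAt p σ i :=
  ⟨fun ⟨_, hab⟩ => ⟨by omega, fun a b => by simpa [Fin.init] using hab a b⟩,
    fun ⟨_, hab⟩ => ⟨h, fun a b => by simpa [Fin.init] using hab a b⟩⟩

theorem avoidsPat_init_iff (σ : Fin (n + 1) → Fin k) :
    AvoidsPat p (Fin.init σ) ↔ AvoidsPat p σ ∨ QuasiAvoids p σ := by
  constructor
  · intro hinit
    by_cases hσ : AvoidsPat p σ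
    · exact Or.inl hσ
    obtain ⟨i, hi⟩ : ∃ i, OccursAt p σ i := by simpa [AvoidsPat] using hσ
    have hlast : ∀ j, OccursAt p σ j → j = n + 1 - m := fun j hj => by
      have hj_end : ¬ j + m ≤ n := fun hle => hinit j ((occursAt_init_iff p σ hle).mpr hj)
      have := hj.1
      omega
    exact Or.inr ⟨hlast i hi ▸ hi, hlast⟩
  · rintro (hσ | ⟨⟨hend, _⟩, hlast⟩) i hi
    · exact hσ i ((occursAt_init_iff p σ hi.1).mp hi)
    · have := hlast i ((occursAt_init_iff p σ hi.1).mp hi)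
      have := hi.1
      omega

theorem AvoidsPat.not_quasiAvoids {σ : Fin n → Fin k} (hσ : AvoidsPat p σ) :
    ¬ QuasiAvoids p σ :=
  fun h => hσ _ h.1

def initAvoidsEquiv :
    {σ : Fin (n + 1) → Fin k // AvoidsPat p (Fin.init σ)} ≃
      {τ : Fin n → Fin k // AvoidsPat p τ} × Fin k where
  toFun σ := (⟨Fin.init σ.1, σ.2⟩, σ.1 (Fin.last n))
  invFun x := ⟨Fin.snoc x.1.1 x.2, by rw [Fin.init_snoc]; exact x.1.2⟩
  left_inv σ := Subtype.ext (Fin.snoc_init_self σ.1)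
  right_inv x := by
    obtain ⟨⟨τ, _⟩, c⟩ := x
    refine Prod.ext (Subtype.ext ?_) ?_ <;> simp

theorem aStarPat_succ_add_aPat_succ :
    aStarPat p (n + 1) k + aPat p (n + 1) k = k * aPat p n k := by
  classical
  have hdisj : Disjoint (QuasiAvoids p (n := n + 1) (k := k)) (AvoidsPat p) :=
    disjoint_iff_inf_le.mpr fun σ ⟨hq, ha⟩ => ha.not_quasiAvoids p hq
  calc aStarPat p (n + 1) k + aPat p (n + 1) k
      = Nat.card {σ : Fin (n + 1) → Fin k // QuasiAvoids p σ ∨ AvoidsPat p σ} := by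
        rw [aStarPat, aPat, ← Nat.card_sum, Nat.card_congr (subtypeOrEquiv _ _ hdisj)]
    _ = Nat.card {σ : Fin (n + 1) → Fin k // AvoidsPat p (Fin.init σ)} :=
        Nat.card_congr <| Equiv.subtypeEquivRight fun σ => by
          rw [avoidsPat_init_iff, or_comm]
    _ = k * aPat p n k := by
        rw [Nat.card_congr (initAvoidsEquiv p), Nat.card_prod, Nat.card_eq_fintype_card (α := Fin k),
          Fintype.card_fin, aPat, mul_comm]

theorem aPat_zero (hm : 1 ≤ m) : aPat p 0 k = 1 := by
  have hall : ∀ σ : Fin 0 → Fin k, AvoidsPat p σ := fun _ _ ⟨_, _⟩ => by omega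
  rw [aPat, Nat.card_congr (Equiv.subtypeUnivEquiv hall), Nat.card_unique]

theorem aStarPat_zero (hm : 1 ≤ m) : aStarPat p 0 k = 0 := by
  have : IsEmpty {σ : Fin 0 → Fin k // QuasiAvoids p σ} :=
    ⟨fun ⟨_, ⟨h, _⟩, _⟩ => by omega⟩
  rw [aStarPat, Nat.card_of_isEmpty]

end Words

theorem PowerSeries.mk_eq_C_mul_X_sub_one_mul_mk_add_one {R : Type*} [CommRing R]
    (a b : ℕ → R) (c : R) (h₀ : b 0 + a 0 = 1) (hsucc : ∀ n, b (n + 1) + a (n + 1) = c * a n) :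
    mk b = (C c * X - 1) * mk a + 1 := by
  ext (_ | n)
  · simp [eq_sub_of_add_eq h₀, sub_eq_neg_add]
  · simp [sub_mul, mul_assoc, coeff_succ_X_mul, ← hsucc]

theorem stmt2_general (m l k : ℕ) (hm : 1 ≤ m) (p : Fin m → Fin l) :
    (∀ n : ℕ, 1 ≤ n → aStarPat p n k + aPat p n k = k * aPat p (n - 1) k) ∧
      (PowerSeries.mk fun n => (aStarPat p n k : ℚ)) =
        ((k : PowerSeries ℚ) * PowerSeries.X - 1) *
            (PowerSeries.mk fun n => (aPat p n k : ℚ)) + 1 := by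
  refine ⟨fun n hn => ?_, ?_⟩
  · obtain ⟨n, rfl⟩ := Nat.exists_eq_add_of_le' hn
    exact aStarPat_succ_add_aPat_succ p
  · rw [← map_natCast (PowerSeries.C (R := ℚ))]
    refine PowerSeries.mk_eq_C_mul_X_sub_one_mul_mk_add_one _ _ _ ?_ fun n => ?_
    · simp [aPat_zero p hm, aStarPat_zero p hm]
    · exact_mod_cast aStarPat_succ_add_aPat_succ p

theorem stmt2 (m l k : ℕ) (hm : 1 ≤ m) (hk : 1 ≤ k) (p : Fin m → Fin l) :
    (∀ n : ℕ, 1 ≤ n → aStarPat p n k + aPat p n k = k * aPat p (n - 1) k) ∧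
      (PowerSeries.mk fun n => (aStarPat p n k : ℚ)) =
        ((k : PowerSeries ℚ) * PowerSeries.X - 1) *
            (PowerSeries.mk fun n => (aPat p n k : ℚ)) + 1 :=
  stmt2_general m l k hm p
end

section
/- Let τ : Fin m → Fin r be a subword pattern and let φ be the shuffle pattern τ-ℓ-τ (where ℓ is greater than every letter of τ and the letters of the two copies of τ are mutually incomparable). Then for all k ≥ 1, in ℚ[[x]]: A_φ(x;k)·(1 − x·A_τ(x;k−1))² = A_φ(x;k−1) − x·A_τ(x;k−1)². -/
/-- `σ` contains the shuffle pattern `τ-ℓ-ν`: there are an occurrence of `τ` at `i`,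
a later position `pp` carrying a letter larger than all letters of the two occurrences,
and a still later occurrence of `ν` at `q`. -/
def ContainsShuffle {m₁ r₁ m₂ r₂ n k : ℕ} (τ : Fin m₁ → Fin r₁) (ν : Fin m₂ → Fin r₂)
    (σ : Fin n → Fin k) : Prop :=
  ∃ (i pp q : ℕ) (hp : pp < n),
    i + m₁ ≤ pp ∧ pp < q ∧ q + m₂ ≤ n ∧ OccursAt τ σ i ∧ OccursAt ν σ q ∧
      ∀ (r : ℕ) (hr : r < n),
        ((i ≤ r ∧ r < i + m₁) ∨ (q ≤ r ∧ r < q + m₂)) → σ ⟨r, hr⟩ < σ ⟨pp, hp⟩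

/-- Generating function for the number of `k`-ary words avoiding the subword pattern `p`. -/
noncomputable def Apat {m l : ℕ} (p : Fin m → Fin l) (k : ℕ) : PowerSeries ℚ :=
  PowerSeries.mk fun n => (Nat.card {σ : Fin n → Fin k // AvoidsPat p σ} : ℚ)

/-- Generating function for the number of `k`-ary words avoiding the shuffle pattern
`τ-ℓ-ν`. -/
noncomputable def Ashuffle {m₁ r₁ m₂ r₂ : ℕ} (τ : Fin m₁ → Fin r₁) (ν : Fin m₂ → Fin r₂)
    (k : ℕ) : PowerSeries ℚ :=
  PowerSeries.mk fun n => (Nat.card {σ : Fin n → Fin k // ¬ ContainsShuffle τ ν σ} : ℚ)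

/-!
Split a word over `K + 1` letters at the first occurrence of its top letter: `σ = α K β` with `α`
a word over `K` letters. An occurrence of `τ-ℓ-ν` in `σ` lies inside `α`, or inside `β`, or is
made of an occurrence of `τ` in `α`, the letter `K`, and an occurrence of `ν` in `β` that does
not use the top letter. Write `A(K) = A_{τ-ℓ-ν}(x; K)`, `B_p = A_p(x; K)`, and let `D` count the
words over `K + 1` letters in which every occurrence of `ν` uses the top letter. The splitting
gives `D = B_ν + x B_ν D` and `A(K + 1) = A(K) + x (B_τ A(K + 1) + (A(K) - B_τ) D)`, since
`A(K) - B_τ` counts the words over `K` letters that contain `τ` but avoid `τ-ℓ-ν`.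
For `ν = τ`, eliminating `D` gives the identity.
-/

open PowerSeries Finset

section Relabel

variable {m l m₁ r₁ m₂ r₂ n k k' : ℕ} {f : Fin k → Fin k'} {σ : Fin n → Fin k}

theorem occursAt_comp_strictMono {p : Fin m → Fin l} (hf : StrictMono f) {i : ℕ} :
    OccursAt p (f ∘ σ) i ↔ OccursAt p σ i := by
  simp only [OccursAt, Function.comp, hf.lt_iff_lt]

theorem containsShuffle_comp_strictMono {τ : Fin m₁ → Fin r₁} {ν : Fin m₂ → Fin r₂}
    (hf : StrictMono f) : ContainsShuffle τ ν (f ∘ σ) ↔ ContainsShuffle τ ν σ := by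
  simp only [ContainsShuffle, OccursAt, Function.comp, hf.lt_iff_lt]

end Relabel

def ShuffleOccursAt {m₁ r₁ m₂ r₂ n k : ℕ} (τ : Fin m₁ → Fin r₁) (ν : Fin m₂ → Fin r₂)
    (σ : Fin n → Fin k) (i pp q : ℕ) : Prop :=
  ∃ hp : pp < n, i + m₁ ≤ pp ∧ pp < q ∧ q + m₂ ≤ n ∧ OccursAt τ σ i ∧ OccursAt ν σ q ∧
    ∀ (r : ℕ) (hr : r < n),
      ((i ≤ r ∧ r < i + m₁) ∨ (q ≤ r ∧ r < q + m₂)) → σ ⟨r, hr⟩ < σ ⟨pp, hp⟩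

theorem containsShuffle_iff_exists_shuffleOccursAt {m₁ r₁ m₂ r₂ n k : ℕ}
    {τ : Fin m₁ → Fin r₁} {ν : Fin m₂ → Fin r₂} {σ : Fin n → Fin k} :
    ContainsShuffle τ ν σ ↔ ∃ i pp q, ShuffleOccursAt τ ν σ i pp q :=
  Iff.rfl

section Shift

variable {m l m₁ r₁ m₂ r₂ n n' k k' c : ℕ} {σ : Fin n → Fin k} {σ' : Fin n' → Fin k'}
  {f : Fin k → Fin k'}

theorem occursAt_add_iff {p : Fin m → Fin l} (hf : StrictMono f) (hc : n + c ≤ n')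
    (hσ : ∀ r (hr : r < n), σ' ⟨r + c, by omega⟩ = f (σ ⟨r, hr⟩)) {i : ℕ} (hi : i + m ≤ n) :
    OccursAt p σ' (i + c) ↔ OccursAt p σ i := by
  have hwin : ∀ a : Fin m, σ' ⟨i + c + a, by omega⟩ = f (σ ⟨i + a, by omega⟩) := fun a => by
    rw [← hσ]
    congr 2
    omega
  simp only [OccursAt, hwin, hf.lt_iff_lt]
  exact ⟨fun ⟨_, h⟩ => ⟨hi, h⟩, fun ⟨_, h⟩ => ⟨by omega, h⟩⟩

theorem shuffleOccursAt_add_iff {τ : Fin m₁ → Fin r₁} {ν : Fin m₂ → Fin r₂}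
    (hf : StrictMono f) (hc : n + c ≤ n')
    (hσ : ∀ r (hr : r < n), σ' ⟨r + c, by omega⟩ = f (σ ⟨r, hr⟩)) {i pp q : ℕ}
    (hq : q + m₂ ≤ n) :
    ShuffleOccursAt τ ν σ' (i + c) (pp + c) (q + c) ↔ ShuffleOccursAt τ ν σ i pp q := by
  constructor
  · rintro ⟨_, h₁, h₂, -, o₁, o₂, hdom⟩
    have hp : pp < n := by omega
    refine ⟨hp, by omega, by omega, hq, (occursAt_add_iff hf hc hσ (by omega)).1 o₁,
      (occursAt_add_iff hf hc hσ hq).1 o₂, fun r hr hw => ?_⟩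
    have := hdom (r + c) (by omega) (by omega)
    rwa [hσ r hr, hσ pp hp, hf.lt_iff_lt] at this
  · rintro ⟨hp, h₁, h₂, -, o₁, o₂, hdom⟩
    refine ⟨by omega, by omega, by omega, by omega, (occursAt_add_iff hf hc hσ (by omega)).2 o₁,
      (occursAt_add_iff hf hc hσ hq).2 o₂, fun r hr hw => ?_⟩
    obtain ⟨r, rfl⟩ : ∃ r₀, r = r₀ + c := ⟨r - c, by omega⟩
    rw [hσ r (by omega), hσ pp hp, hf.lt_iff_lt]
    exact hdom r _ (by omega)

theorem containsShuffle_of_add {τ : Fin m₁ → Fin r₁} {ν : Fin m₂ → Fin r₂}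
    (hf : StrictMono f) (hc : n + c ≤ n')
    (hσ : ∀ r (hr : r < n), σ' ⟨r + c, by omega⟩ = f (σ ⟨r, hr⟩))
    (h : ContainsShuffle τ ν σ) : ContainsShuffle τ ν σ' := by
  obtain ⟨i, pp, q, hocc⟩ := h
  obtain ⟨-, -, -, hq, -⟩ := id hocc
  exact ⟨i + c, pp + c, q + c, (shuffleOccursAt_add_iff hf hc hσ hq).2 hocc⟩

end Shift

def spliceTop {K n : ℕ} (i : ℕ) (α : Fin i → Fin K) (β : Fin (n - i - 1) → Fin (K + 1)) :
    Fin n → Fin (K + 1) :=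
  fun j => if h : (j : ℕ) < i then (α ⟨j, h⟩).castSucc
    else if h' : (j : ℕ) = i then Fin.last K
    else β ⟨j - (i + 1), by have := j.isLt; omega⟩

section SpliceTop

variable {K n i : ℕ} {α : Fin i → Fin K} {β : Fin (n - i - 1) → Fin (K + 1)}

theorem spliceTop_of_lt {j : ℕ} (h : j < i) (hj : j < n) :
    spliceTop i α β ⟨j, hj⟩ = (α ⟨j, h⟩).castSucc :=
  dif_pos h

theorem spliceTop_self (hi : i < n) : spliceTop i α β ⟨i, hi⟩ = Fin.last K := by
  simp [spliceTop]

theorem spliceTop_add {r : ℕ} (hr : r < n - i - 1) :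
    spliceTop i α β ⟨r + (i + 1), by omega⟩ = β ⟨r, hr⟩ := by
  simp [spliceTop, show ¬ r + (i + 1) < i by omega, show r + (i + 1) ≠ i by omega]

end SpliceTop

section UsesTop

variable {m l m₁ r₁ m₂ r₂ K n : ℕ}

def EveryOccurrenceUsesTop (p : Fin m → Fin l) (σ : Fin n → Fin (K + 1)) : Prop :=
  ∀ i, OccursAt p σ i → ∃ (j : ℕ) (hj : j < n), i ≤ j ∧ j < i + m ∧ σ ⟨j, hj⟩ = Fin.last K

theorem everyOccurrenceUsesTop_castSucc_comp_iff {p : Fin m → Fin l} {σ : Fin n → Fin K} :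
    EveryOccurrenceUsesTop p (Fin.castSucc ∘ σ) ↔ AvoidsPat p σ := by
  refine ⟨fun h i hocc => ?_, fun h i hocc => ?_⟩
  · obtain ⟨j, hj, -, -, htop⟩ := h i ((occursAt_comp_strictMono Fin.strictMono_castSucc).2 hocc)
    exact Fin.castSucc_ne_last _ htop
  · exact (h i ((occursAt_comp_strictMono Fin.strictMono_castSucc).1 hocc)).elim

theorem ShuffleOccursAt.ne_last {τ : Fin m₁ → Fin r₁} {ν : Fin m₂ → Fin r₂}
    {σ : Fin n → Fin (K + 1)} {i pp q : ℕ} (h : ShuffleOccursAt τ ν σ i pp q) {r : ℕ}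
    (hr : r < n) (hw : (i ≤ r ∧ r < i + m₁) ∨ (q ≤ r ∧ r < q + m₂)) :
    σ ⟨r, hr⟩ ≠ Fin.last K := by
  obtain ⟨hp, -, -, -, -, -, hdom⟩ := h
  exact ((hdom r hr hw).trans_le (Fin.le_last _)).ne

theorem AvoidsPat.not_containsShuffle {τ : Fin m₁ → Fin r₁} {ν : Fin m₂ → Fin r₂}
    {k : ℕ} {σ : Fin n → Fin k} (h : AvoidsPat τ σ) : ¬ ContainsShuffle τ ν σ := by
  rintro ⟨i, pp, q, -, -, -, -, hocc, -⟩
  exact h i hocc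

theorem EveryOccurrenceUsesTop.not_containsShuffle {τ : Fin m₁ → Fin r₁}
    {ν : Fin m₂ → Fin r₂} {σ : Fin n → Fin (K + 1)} (h : EveryOccurrenceUsesTop ν σ) :
    ¬ ContainsShuffle τ ν σ := by
  intro hσ
  obtain ⟨i, pp, q, hshuffle⟩ := containsShuffle_iff_exists_shuffleOccursAt.1 hσ
  obtain ⟨-, -, -, -, -, hocc, -⟩ := id hshuffle
  obtain ⟨j, hj, hj₁, hj₂, htop⟩ := h q hocc
  exact hshuffle.ne_last hj (Or.inr ⟨hj₁, hj₂⟩) htop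

variable {i : ℕ} {α : Fin i → Fin K} {β : Fin (n - i - 1) → Fin (K + 1)}

theorem occursAt_spliceTop_iff_left {p : Fin m → Fin l} (hi : i < n) {a : ℕ}
    (ha : a + m ≤ i) : OccursAt p (spliceTop i α β) a ↔ OccursAt p α a :=
  occursAt_add_iff (c := 0) Fin.strictMono_castSucc hi.le (fun _ hr => spliceTop_of_lt hr _) ha

theorem occursAt_spliceTop_iff_right {p : Fin m → Fin l} (hi : i < n) {b : ℕ}
    (hb : b + m ≤ n - i - 1) :
    OccursAt p (spliceTop i α β) (b + (i + 1)) ↔ OccursAt p β b :=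
  occursAt_add_iff strictMono_id (by omega) (fun _ hr => spliceTop_add hr) hb

end UsesTop

section SpliceTopPatterns

variable {m l m₁ r₁ m₂ r₂ K n i : ℕ} {α : Fin i → Fin K} {β : Fin (n - i - 1) → Fin (K + 1)}

theorem everyOccurrenceUsesTop_spliceTop_iff {p : Fin m → Fin l} (hi : i < n) :
    EveryOccurrenceUsesTop p (spliceTop i α β) ↔
      AvoidsPat p α ∧ EveryOccurrenceUsesTop p β := by
  refine ⟨fun h => ⟨fun a hocc => ?_, fun b hocc => ?_⟩, fun ⟨hα, hβ⟩ a hocc => ?_⟩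
  · obtain ⟨j, hj, hj₁, hj₂, htop⟩ := h a ((occursAt_spliceTop_iff_left hi hocc.1).2 hocc)
    rw [spliceTop_of_lt (by have := hocc.1; omega)] at htop
    exact Fin.castSucc_ne_last _ htop
  · obtain ⟨j, hj, hj₁, hj₂, htop⟩ := h _ ((occursAt_spliceTop_iff_right hi hocc.1).2 hocc)
    obtain ⟨j, rfl⟩ : ∃ t, j = t + (i + 1) := ⟨j - (i + 1), by omega⟩
    exact ⟨j, by omega, by omega, by omega, by rwa [spliceTop_add] at htop⟩
  · obtain ⟨ha, -⟩ := id hocc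
    rcases show a + m ≤ i ∨ (a ≤ i ∧ i < a + m) ∨ i < a by omega with hleft | hmid | hright
    · exact (hα a ((occursAt_spliceTop_iff_left hi hleft).1 hocc)).elim
    · exact ⟨i, hi, hmid.1, hmid.2, spliceTop_self hi⟩
    · obtain ⟨b, rfl⟩ : ∃ b, a = b + (i + 1) := ⟨a - (i + 1), by omega⟩
      obtain ⟨j, hj, hj₁, hj₂, htop⟩ :=
        hβ b ((occursAt_spliceTop_iff_right hi (by omega)).1 hocc)
      exact ⟨j + (i + 1), by omega, by omega, by omega, by rwa [spliceTop_add]⟩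

variable {τ : Fin m₁ → Fin r₁} {ν : Fin m₂ → Fin r₂}

theorem containsShuffle_spliceTop_of_containsPat_of_not_everyOccurrenceUsesTop (hi : i < n)
    (hα : ¬ AvoidsPat τ α) (hβ : ¬ EveryOccurrenceUsesTop ν β) :
    ContainsShuffle τ ν (spliceTop i α β) := by
  simp only [AvoidsPat, EveryOccurrenceUsesTop, not_forall, not_not, not_exists, not_and] at hα hβ
  obtain ⟨a, hoccα⟩ := hα
  obtain ⟨b, hoccβ, hβfree⟩ := hβ
  refine ⟨a, i, b + (i + 1), hi, hoccα.1, by omega, by have := hoccβ.1; omega,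
    (occursAt_spliceTop_iff_left hi hoccα.1).2 hoccα,
    (occursAt_spliceTop_iff_right hi hoccβ.1).2 hoccβ, fun r hr hw => ?_⟩
  rw [spliceTop_self]
  rcases hw with ⟨-, hr₂⟩ | ⟨hr₁, hr₂⟩
  · rw [spliceTop_of_lt (by have := hoccα.1; omega)]
    exact Fin.castSucc_lt_last _
  · obtain ⟨t, rfl⟩ : ∃ t, r = t + (i + 1) := ⟨r - (i + 1), by omega⟩
    rw [spliceTop_add (by omega)]
    exact Fin.lt_last_iff_ne_last.2 (hβfree t (by omega) (by omega) (by omega))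

theorem ContainsShuffle.of_spliceTop (hi : i < n) (h : ContainsShuffle τ ν (spliceTop i α β)) :
    ContainsShuffle τ ν α ∨ ContainsShuffle τ ν β ∨
      (¬ AvoidsPat τ α ∧ ¬ EveryOccurrenceUsesTop ν β) := by
  obtain ⟨a, pp, q, hocc⟩ := containsShuffle_iff_exists_shuffleOccursAt.1 h
  obtain ⟨hp, h₁, h₂, hq, o₁, o₂, -⟩ := id hocc
  have hfree : ∀ r, (a ≤ r ∧ r < a + m₁) ∨ (q ≤ r ∧ r < q + m₂) → r ≠ i := by
    intro r hw hri
    subst hri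
    exact hocc.ne_last hi hw (spliceTop_self hi)
  by_cases hqi : q + m₂ ≤ i
  · exact .inl ⟨a, pp, q, (shuffleOccursAt_add_iff (c := 0) Fin.strictMono_castSucc hi.le
      (fun _ hr => spliceTop_of_lt hr _) hqi).1 hocc⟩
  by_cases hai : i < a
  · obtain ⟨a, rfl⟩ : ∃ t, a = t + (i + 1) := ⟨a - (i + 1), by omega⟩
    obtain ⟨pp, rfl⟩ : ∃ t, pp = t + (i + 1) := ⟨pp - (i + 1), by omega⟩
    obtain ⟨q, rfl⟩ : ∃ t, q = t + (i + 1) := ⟨q - (i + 1), by omega⟩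
    exact .inr <| .inl ⟨a, pp, q, (shuffleOccursAt_add_iff strictMono_id (by omega)
      (fun _ hr => spliceTop_add hr) (by omega)).1 hocc⟩
  have hai : a + m₁ ≤ i := by
    by_contra
    exact hfree i (.inl ⟨by omega, by omega⟩) rfl
  have hqi : i < q := by
    by_contra
    exact hfree i (.inr ⟨by omega, by omega⟩) rfl
  obtain ⟨q, rfl⟩ : ∃ t, q = t + (i + 1) := ⟨q - (i + 1), by omega⟩
  refine .inr <| .inr ⟨fun hα => hα a ((occursAt_spliceTop_iff_left hi hai).1 o₁), fun hβ => ?_⟩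
  obtain ⟨j, hj, hj₁, hj₂, htop⟩ := hβ q ((occursAt_spliceTop_iff_right hi (by omega)).1 o₂)
  exact hocc.ne_last (r := j + (i + 1)) (by omega) (.inr ⟨by omega, by omega⟩)
    (by rwa [spliceTop_add])

theorem containsShuffle_spliceTop_iff (hi : i < n) :
    ContainsShuffle τ ν (spliceTop i α β) ↔ ContainsShuffle τ ν α ∨ ContainsShuffle τ ν β ∨
      (¬ AvoidsPat τ α ∧ ¬ EveryOccurrenceUsesTop ν β) := by
  refine ⟨ContainsShuffle.of_spliceTop hi, ?_⟩
  rintro (h | h | ⟨hα, hβ⟩)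
  · exact containsShuffle_of_add (c := 0) Fin.strictMono_castSucc hi.le
      (fun _ hr => spliceTop_of_lt hr _) h
  · exact containsShuffle_of_add strictMono_id (by omega) (fun _ hr => spliceTop_add hr) h
  · exact containsShuffle_spliceTop_of_containsPat_of_not_everyOccurrenceUsesTop hi hα hβ

end SpliceTopPatterns

section Decomposition

variable {K n : ℕ}

/-- Splitting at the first occurrence of the top letter: a word over `Fin (K + 1)` either
misses the top letter or is uniquely `α ++ [top] ++ β` with `α` over `Fin K`. -/
def joinTopSplit :
    (Fin n → Fin K) ⊕ (Σ i : Fin n, (Fin i → Fin K) × (Fin (n - i - 1) → Fin (K + 1))) →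
      Fin n → Fin (K + 1) :=
  Sum.elim (fun σ => Fin.castSucc ∘ σ) (fun x => spliceTop x.1 x.2.1 x.2.2)

theorem spliceTop_ne_castSucc_comp {i : ℕ} (hi : i < n) (α : Fin i → Fin K)
    (β : Fin (n - i - 1) → Fin (K + 1)) (σ : Fin n → Fin K) :
    spliceTop i α β ≠ Fin.castSucc ∘ σ := fun h =>
  Fin.castSucc_ne_last _ ((congrFun h ⟨i, hi⟩).symm.trans (spliceTop_self hi))

theorem spliceTop_ne_spliceTop_of_lt {i i' : ℕ} (hi : i < n) (h : i < i')
    (α : Fin i → Fin K) (β : Fin (n - i - 1) → Fin (K + 1))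
    (α' : Fin i' → Fin K) (β' : Fin (n - i' - 1) → Fin (K + 1)) :
    spliceTop i α β ≠ spliceTop i' α' β' := fun he => by
  have := congrFun he ⟨i, hi⟩
  rw [spliceTop_self, spliceTop_of_lt h] at this
  exact Fin.castSucc_ne_last _ this.symm

theorem joinTopSplit_injective : Function.Injective (joinTopSplit (K := K) (n := n)) := by
  rintro (σ | ⟨i, α, β⟩) (σ' | ⟨i', α', β'⟩) h <;>
    simp only [joinTopSplit, Sum.elim_inl, Sum.elim_inr] at h
  · rw [(Fin.castSucc_injective K).comp_left h]
  · exact (spliceTop_ne_castSucc_comp i'.isLt α' β' σ h.symm).elim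
  · exact (spliceTop_ne_castSucc_comp i.isLt α β σ' h).elim
  · obtain rfl : i = i' := by
      rcases lt_trichotomy (i : ℕ) i' with hlt | heq | hgt
      · exact (spliceTop_ne_spliceTop_of_lt i.isLt hlt _ _ _ _ h).elim
      · exact Fin.ext heq
      · exact (spliceTop_ne_spliceTop_of_lt i'.isLt hgt _ _ _ _ h.symm).elim
    have hα : α = α' := funext fun a => Fin.castSucc_injective K <| by
      simpa only [spliceTop_of_lt a.isLt] using congrFun h ⟨a, a.isLt.trans i.isLt⟩
    have hβ : β = β' := funext fun b => by
      simpa only [spliceTop_add b.isLt] using congrFun h ⟨b + (i + 1), by omega⟩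
    rw [hα, hβ]

theorem joinTopSplit_surjective : Function.Surjective (joinTopSplit (K := K) (n := n)) := by
  intro σ
  by_cases htop : ∃ j, σ j = Fin.last K
  · obtain ⟨i, hσi, hmin⟩ := wellFounded_lt.has_min {j | σ j = Fin.last K} htop
    have hα : ∀ a : Fin i, σ ⟨a, a.isLt.trans i.isLt⟩ ≠ Fin.last K := fun a ha =>
      hmin _ ha a.isLt
    refine ⟨.inr ⟨i, fun a => (σ _).castPred (hα a), fun b => σ ⟨b + (i + 1), by omega⟩⟩,
      funext fun ⟨j, hj⟩ => ?_⟩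
    simp only [joinTopSplit, Sum.elim_inr]
    rcases lt_trichotomy j i with hlt | rfl | hgt
    · rw [spliceTop_of_lt hlt, Fin.castSucc_castPred]
    · exact (spliceTop_self hj).trans hσi.symm
    · obtain ⟨t, rfl⟩ : ∃ t, j = t + (i + 1) := ⟨j - (i + 1), by omega⟩
      rw [spliceTop_add (by omega)]
  · exact ⟨.inl fun j => (σ j).castPred (not_exists.1 htop j),
      funext fun j => Fin.castSucc_castPred _ _⟩

theorem card_subtype_eq_card_add_sum_spliceTop (P : (Fin n → Fin (K + 1)) → Prop) :
    Nat.card {σ // P σ} = Nat.card {σ : Fin n → Fin K // P (Fin.castSucc ∘ σ)} +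
      ∑ i : Fin n, Nat.card {x : (Fin i → Fin K) × (Fin (n - i - 1) → Fin (K + 1)) //
        P (spliceTop i x.1 x.2)} := by
  let e := Equiv.ofBijective _ ⟨joinTopSplit_injective (K := K) (n := n),
    joinTopSplit_surjective⟩
  rw [← Nat.card_congr (e.subtypeEquiv fun _ => Iff.rfl), Nat.card_congr Equiv.subtypeSum,
    Nat.card_sum, ← Nat.card_sigma]
  congr 1
  exact Nat.card_congr ⟨fun y => ⟨y.1.1, y.1.2, y.2⟩, fun y => ⟨⟨y.1, y.2.1⟩, y.2.2⟩,
    fun _ => rfl, fun _ => rfl⟩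

end Decomposition

theorem Nat.card_subtype_prod_or {A B : Type*} [Finite A] [Finite B] {p₁ p₃ : A → Prop}
    {p₂ p₄ : B → Prop} (h : ∀ a, p₁ a → ¬ p₃ a) :
    Nat.card {x : A × B // p₁ x.1 ∧ p₂ x.2 ∨ p₃ x.1 ∧ p₄ x.2} =
      Nat.card {a // p₁ a} * Nat.card {b // p₂ b} +
        Nat.card {a // p₃ a} * Nat.card {b // p₄ b} := by
  classical
  have hdisj : Disjoint (fun x : A × B => p₁ x.1 ∧ p₂ x.2) (fun x => p₃ x.1 ∧ p₄ x.2) :=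
    Pi.disjoint_iff.2 fun x => Prop.disjoint_iff.2 fun hx => h _ hx.1.1 hx.2.1
  rw [Nat.card_congr (subtypeOrEquiv _ _ hdisj), Nat.card_sum,
    Nat.card_congr Equiv.subtypeProdEquivProd, Nat.card_congr Equiv.subtypeProdEquivProd,
    Nat.card_prod, Nat.card_prod]

section Counting

variable {m₁ r₁ m₂ r₂ : ℕ} (τ : Fin m₁ → Fin r₁) (ν : Fin m₂ → Fin r₂)

theorem card_not_containsShuffle_eq_add {n k : ℕ} :
    Nat.card {σ : Fin n → Fin k // ¬ ContainsShuffle τ ν σ} =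
      Nat.card {σ : Fin n → Fin k // AvoidsPat τ σ} +
        Nat.card {σ : Fin n → Fin k // ¬ ContainsShuffle τ ν σ ∧ ¬ AvoidsPat τ σ} := by
  classical
  rw [← Nat.card_sum, ← Nat.card_congr (subtypeOrEquiv _ _ _)]
  · exact Nat.card_congr (Equiv.subtypeEquivRight fun σ =>
      ⟨fun h => (em _).imp id (⟨h, ·⟩), (·.elim AvoidsPat.not_containsShuffle And.left)⟩)
  · exact Pi.disjoint_iff.2 fun σ => Prop.disjoint_iff.2 fun h => h.2.2 h.1

theorem card_not_containsShuffle_spliceTop {K n : ℕ} (i : Fin n) :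
    Nat.card {x : (Fin i → Fin K) × (Fin (n - i - 1) → Fin (K + 1)) //
        ¬ ContainsShuffle τ ν (spliceTop i x.1 x.2)} =
      Nat.card {α : Fin i → Fin K // AvoidsPat τ α} *
          Nat.card {β : Fin (n - i - 1) → Fin (K + 1) // ¬ ContainsShuffle τ ν β} +
        Nat.card {α : Fin i → Fin K // ¬ ContainsShuffle τ ν α ∧ ¬ AvoidsPat τ α} *
          Nat.card {β : Fin (n - i - 1) → Fin (K + 1) // EveryOccurrenceUsesTop ν β} := by
  rw [← Nat.card_subtype_prod_or fun _ h h' => h'.2 h]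
  refine Nat.card_congr (Equiv.subtypeEquivRight fun x => ?_)
  rw [containsShuffle_spliceTop_iff i.isLt]
  by_cases hα : AvoidsPat τ x.1
  · simp [hα, hα.not_containsShuffle]
  · have : EveryOccurrenceUsesTop ν x.2 → ¬ ContainsShuffle τ ν x.2 :=
      EveryOccurrenceUsesTop.not_containsShuffle
    tauto

theorem card_everyOccurrenceUsesTop_spliceTop {m l K n : ℕ} (p : Fin m → Fin l) (i : Fin n) :
    Nat.card {x : (Fin i → Fin K) × (Fin (n - i - 1) → Fin (K + 1)) //
        EveryOccurrenceUsesTop p (spliceTop i x.1 x.2)} =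
      Nat.card {α : Fin i → Fin K // AvoidsPat p α} *
        Nat.card {β : Fin (n - i - 1) → Fin (K + 1) // EveryOccurrenceUsesTop p β} := by
  rw [← Nat.card_prod, ← Nat.card_congr Equiv.subtypeProdEquivProd]
  exact Nat.card_congr
    (Equiv.subtypeEquivRight fun _ => everyOccurrenceUsesTop_spliceTop_iff i.isLt)

end Counting

theorem PowerSeries.coeff_X_mul_mul {R : Type*} [CommSemiring R] (φ ψ : R⟦X⟧) (n : ℕ) :
    coeff n (X * (φ * ψ)) = ∑ i ∈ range n, coeff i φ * coeff (n - i - 1) ψ := by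
  cases n with
  | zero => simp
  | succ n =>
    rw [coeff_succ_X_mul, coeff_mul, Nat.sum_antidiagonal_eq_sum_range_succ_mk]
    exact sum_congr rfl fun i _ => by rw [Nat.sub_right_comm, Nat.add_sub_cancel]

noncomputable def AusesTop {m l : ℕ} (p : Fin m → Fin l) (K : ℕ) : PowerSeries ℚ :=
  PowerSeries.mk fun n =>
    (Nat.card {σ : Fin n → Fin (K + 1) // EveryOccurrenceUsesTop p σ} : ℚ)

theorem AusesTop_eq {m l : ℕ} (p : Fin m → Fin l) (K : ℕ) :
    AusesTop p K = Apat p K + X * (Apat p K * AusesTop p K) := by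
  ext n
  rw [map_add, coeff_X_mul_mul, ← Fin.sum_univ_eq_sum_range]
  simp only [AusesTop, Apat, coeff_mk]
  rw [card_subtype_eq_card_add_sum_spliceTop, Nat.card_congr (Equiv.subtypeEquivRight
    fun _ => everyOccurrenceUsesTop_castSucc_comp_iff)]
  push_cast
  simp only [card_everyOccurrenceUsesTop_spliceTop, Nat.cast_mul]

theorem Ashuffle_succ {m₁ r₁ m₂ r₂ : ℕ} (τ : Fin m₁ → Fin r₁) (ν : Fin m₂ → Fin r₂) (K : ℕ) :
    Ashuffle τ ν (K + 1) = Ashuffle τ ν K +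
      X * (Apat τ K * Ashuffle τ ν (K + 1) + (Ashuffle τ ν K - Apat τ K) * AusesTop ν K) := by
  ext n
  rw [map_add, mul_add, map_add, coeff_X_mul_mul, coeff_X_mul_mul, ← sum_add_distrib,
    ← Fin.sum_univ_eq_sum_range]
  simp only [Ashuffle, Apat, AusesTop, coeff_mk, map_sub]
  rw [card_subtype_eq_card_add_sum_spliceTop, Nat.card_congr (Equiv.subtypeEquivRight
    fun _ => not_congr (containsShuffle_comp_strictMono Fin.strictMono_castSucc))]
  push_cast
  refine congrArg _ (sum_congr rfl fun i _ => ?_)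
  rw [card_not_containsShuffle_spliceTop, card_not_containsShuffle_eq_add τ ν (n := i)]
  push_cast
  ring

theorem stmt4 (m r : ℕ) (τ : Fin m → Fin r) (k : ℕ) (hk : 1 ≤ k) :
    Ashuffle τ τ k * (1 - PowerSeries.X * Apat τ (k - 1)) ^ 2 =
      Ashuffle τ τ (k - 1) - PowerSeries.X * Apat τ (k - 1) ^ 2 := by
  obtain ⟨K, rfl⟩ : ∃ K, k = K + 1 := ⟨k - 1, by omega⟩
  rw [Nat.add_sub_cancel]
  linear_combination (1 - X * Apat τ K) * Ashuffle_succ τ τ K +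
    X * (Ashuffle τ τ K - Apat τ K) * AusesTop_eq τ K
end

section
/- Let τ : Fin m₁ → Fin r₁ and ν : Fin m₂ → Fin r₂ be subword patterns and let f₁, f₂ each be a trivial bijection (one of: identity, reverse, complement, or reverse composed with complement). Then for every n ≥ 0 and k ≥ 1, the number of k-ary words of length n avoiding the shuffle pattern τ-ℓ-ν equals the number of k-ary words of length n avoiding the shuffle pattern f₁(τ)-ℓ-f₂(ν). -/
/-- The reverse of a pattern: `R(p)(a) = p(m - 1 - a)`. -/
def PatRev {m l : ℕ} (p : Fin m → Fin l) : Fin m → Fin l := fun a => p a.rev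

/-- The complement of a pattern: `C(p)(a) = l - 1 - p(a)`. -/
def PatCompl {m l : ℕ} (p : Fin m → Fin l) : Fin m → Fin l := fun a => (p a).rev

/-- A trivial bijection on patterns is one of: identity, reverse, complement,
or reverse composed with complement. -/
def IsTrivialBij {m l : ℕ} (f : (Fin m → Fin l) → (Fin m → Fin l)) : Prop :=
  f = id ∨ f = PatRev ∨ f = PatCompl ∨ f = fun p => PatRev (PatCompl p)

/-!
Split a word over `{0, …, K}` at the first occurrence of its largest letter `K`, as `A K B`
with `A` a word over `{0, …, K - 1}`. An occurrence of `τ-ℓ-ν` lies inside `A`, lies inside `B`,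
or may be taken to use this `K` as its large letter; in the last case it amounts to an occurrence
of `τ` in `A` together with an occurrence of `ν` in `B` using only letters below `K`. Counting
along this decomposition gives recurrences in `n` and `k` whose only inputs are the numbers of
words avoiding `τ` and avoiding `ν`. Reversal and complementation of words biject the words
avoiding `p` with those avoiding `R(p)` and `C(p)`, so a trivial bijection does not change these
inputs.
-/

theorem List.IsInfix.of_append_cons {α : Type*} {w A B : List α} {x : α}
    (h : w <:+: A ++ x :: B) (hx : x ∉ w) : w <:+: A ∨ w <:+: B := by
  have mem_of_prefix : ∀ {u : List α}, u ≠ [] → u <+: x :: B → x ∈ u := by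
    rintro (_ | ⟨y, u⟩) hne hu
    · exact absurd rfl hne
    · rw [List.cons_prefix_cons] at hu
      exact hu.1 ▸ List.mem_cons_self
  rcases List.infix_append_iff_ne_nil.1 h with hA | hB | ⟨u, v, -, hv, rfl, -, hpre⟩
  · exact .inl hA
  · rcases List.infix_cons_iff.1 hB with hpre | hB
    · rcases eq_or_ne w [] with rfl | hne
      · exact .inl List.nil_infix
      · exact absurd (mem_of_prefix hne hpre) hx
    · exact .inr hB
  · exact absurd (List.mem_append_right u (mem_of_prefix hv hpre)) hx

theorem List.infix_append_cons {α : Type*} (A B : List α) (x : α) : B <:+: A ++ x :: B :=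
  ⟨A ++ [x], [], by simp⟩

theorem List.append_cons_inj_of_notMem_left {α : Type*} {A A' B B' : List α} {a : α}
    (hA : a ∉ A) (hA' : a ∉ A') (h : A ++ a :: B = A' ++ a :: B') : A = A' ∧ B = B' := by
  rcases List.append_eq_append_iff.1 h with ⟨_ | ⟨y, C⟩, rfl, hC⟩ | ⟨_ | ⟨y, C⟩, rfl, hC⟩ <;>
    simp_all

theorem List.infix_iff_exists_drop_take {α : Type*} {w L : List α} :
    w <:+: L ↔ ∃ i, i + w.length ≤ L.length ∧ (L.drop i).take w.length = w := by
  constructor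
  · rintro ⟨s, t, rfl⟩
    exact ⟨s.length, by simp, by simp⟩
  · rintro ⟨i, -, h⟩
    exact h ▸ (List.take_prefix _ _).isInfix.trans (List.drop_suffix _ _).isInfix

theorem List.exists_eq_append_cons_of_lt_length {α : Type*} {L : List α} {i : ℕ}
    (h : i < L.length) : ∃ A x B, L = A ++ x :: B ∧ A.length = i :=
  ⟨L.take i, L[i], L.drop (i + 1), by rw [List.getElem_cons_drop, List.take_append_drop],
    by simp; omega⟩

theorem patRev_patRev {m l : ℕ} (p : Fin m → Fin l) : PatRev (PatRev p) = p :=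
  funext fun a => by simp [PatRev]

theorem patCompl_patCompl {m l : ℕ} (p : Fin m → Fin l) : PatCompl (PatCompl p) = p :=
  funext fun a => by simp [PatCompl]

open Finset

namespace ListWord

/-! Words are handled as lists of naturals, so that the alphabet size can vary in the recursion. -/

open Classical

variable {m l m' l' m'' l'' m₁ r₁ m₂ r₂ m₁' r₁' m₂' r₂' n k : ℕ}

def Matches (p : Fin m → Fin l) (w : List ℕ) : Prop :=
  w.length = m ∧ ∀ a b : Fin m, w.getD a 0 < w.getD b 0 ↔ p a < p b

def Contains (p : Fin m → Fin l) (L : List ℕ) : Prop :=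
  ∃ w, w <:+: L ∧ Matches p w

def ContainsBelow (p : Fin m → Fin l) (x : ℕ) (L : List ℕ) : Prop :=
  ∃ w, w <:+: L ∧ Matches p w ∧ ∀ y ∈ w, y < x

def ContainsShufflePat (τ : Fin m₁ → Fin r₁) (ν : Fin m₂ → Fin r₂) (L : List ℕ) : Prop :=
  ∃ A x B, L = A ++ x :: B ∧ ContainsBelow τ x A ∧ ContainsBelow ν x B

section Containment

variable {p : Fin m → Fin l} {x : ℕ} {L : List ℕ}

theorem ContainsBelow.contains (h : ContainsBelow p x L) : Contains p L :=
  let ⟨w, hw, hp, _⟩ := h; ⟨w, hw, hp⟩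

theorem Contains.containsBelow (h : Contains p L) (hL : ∀ y ∈ L, y < x) :
    ContainsBelow p x L :=
  let ⟨w, hw, hp⟩ := h; ⟨w, hw, hp, fun y hy => hL y (hw.subset hy)⟩

theorem ContainsBelow.mono {x' : ℕ} {L' : List ℕ} (h : ContainsBelow p x L) (hx : x ≤ x')
    (hL : L <:+: L') : ContainsBelow p x' L' :=
  let ⟨w, hw, hp, hlt⟩ := h; ⟨w, hw.trans hL, hp, fun y hy => (hlt y hy).trans_le hx⟩

theorem ContainsBelow.of_append_cons {A B : List ℕ} {y : ℕ}
    (h : ContainsBelow p x (A ++ y :: B)) (hx : x ≤ y) :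
    ContainsBelow p x A ∨ ContainsBelow p x B := by
  obtain ⟨w, hw, hp, hlt⟩ := h
  exact (hw.of_append_cons fun hy => (hlt y hy).not_ge hx).imp
    (fun hA => ⟨w, hA, hp, hlt⟩) (fun hB => ⟨w, hB, hp, hlt⟩)

theorem containsBelow_append_cons {A B : List ℕ} (hA : ∀ y ∈ A, y < x) :
    ContainsBelow p x (A ++ x :: B) ↔ Contains p A ∨ ContainsBelow p x B := by
  refine ⟨fun h => (h.of_append_cons le_rfl).imp_left ContainsBelow.contains, ?_⟩
  rintro (h | h)
  · exact (h.containsBelow hA).mono le_rfl List.infix_append_left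
  · exact h.mono le_rfl (List.infix_append_cons A B x)

end Containment

section Shuffle

variable {τ : Fin m₁ → Fin r₁} {ν : Fin m₂ → Fin r₂}

theorem ContainsShufflePat.contains {L : List ℕ} (h : ContainsShufflePat τ ν L) :
    Contains τ L := by
  obtain ⟨A, x, B, rfl, hA, -⟩ := h
  exact (hA.mono le_rfl List.infix_append_left).contains

theorem ContainsShufflePat.containsBelow {L : List ℕ} {K : ℕ} (h : ContainsShufflePat τ ν L)
    (hL : ∀ y ∈ L, y ≤ K) : ContainsBelow ν K L := by
  obtain ⟨A, x, B, rfl, -, hB⟩ := h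
  exact hB.mono (hL x (by simp)) (List.infix_append_cons A B x)

theorem containsShufflePat_append_cons {A B : List ℕ} {K : ℕ} (hA : ∀ y ∈ A, y < K)
    (hB : ∀ y ∈ B, y ≤ K) :
    ContainsShufflePat τ ν (A ++ K :: B) ↔
      ContainsShufflePat τ ν A ∨ ContainsShufflePat τ ν B ∨
        (Contains τ A ∧ ContainsBelow ν K B) := by
  constructor
  · rintro ⟨A', x, B', hL, h₁, h₂⟩
    rcases List.append_eq_append_iff.1 hL with ⟨_ | ⟨y, C⟩, rfl, hC⟩ | ⟨_ | ⟨y, C⟩, hA', hC⟩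
    · obtain ⟨rfl, rfl⟩ := List.cons_eq_cons.1 hC
      exact .inr (.inr ⟨by simpa using h₁.contains, h₂⟩)
    · obtain ⟨rfl, rfl⟩ := List.cons_eq_cons.1 hC
      have hx : x ≤ K := hB x (by simp)
      rcases h₁.of_append_cons hx with h₁ | h₁
      · exact .inr (.inr ⟨h₁.contains, h₂.mono hx (List.infix_append_cons C B' x)⟩)
      · exact .inr (.inl ⟨C, x, B', rfl, h₁, h₂⟩)
    · obtain ⟨rfl, rfl⟩ := List.cons_eq_cons.1 hC
      exact .inr (.inr ⟨by simpa [hA'] using h₁.contains, h₂⟩)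
    · obtain ⟨rfl, rfl⟩ := List.cons_eq_cons.1 hC
      subst hA'
      have hx : x < K := hA x (by simp)
      rcases h₂.of_append_cons hx.le with h₂ | h₂
      · exact .inl ⟨A', x, C, rfl, h₁, h₂⟩
      · exact .inr (.inr ⟨(h₁.mono le_rfl List.infix_append_left).contains,
          h₂.mono hx.le (List.infix_refl B)⟩)
  · rintro (⟨A', x, B', rfl, h₁, h₂⟩ | ⟨A', x, B', rfl, h₁, h₂⟩ | ⟨h₁, h₂⟩)
    · exact ⟨A', x, B' ++ K :: B, by simp, h₁, h₂.mono le_rfl List.infix_append_left⟩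
    · exact ⟨A ++ K :: A', x, B', by simp, h₁.mono le_rfl (List.infix_append_cons A A' K), h₂⟩
    · exact ⟨A, K, B, rfl, h₁.containsBelow hA, h₂⟩

end Shuffle

section Symmetries

variable {p : Fin m → Fin l}

theorem Matches.reverse {w : List ℕ} (h : Matches p w) : Matches (PatRev p) w.reverse := by
  refine ⟨by simp [h.1], fun a b => ?_⟩
  have getD_rev : ∀ c : Fin m, w.reverse.getD c 0 = w.getD c.rev 0 := fun c => by
    rw [List.getD_reverse _ (by simp [h.1]), h.1, Fin.val_rev, Nat.sub_sub, Nat.add_comm]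
  rw [getD_rev, getD_rev]
  exact h.2 a.rev b.rev

theorem Matches.map_compl {w : List ℕ} (hw : ∀ y ∈ w, y < k) (h : Matches p w) :
    Matches (PatCompl p) (w.map (k - 1 - ·)) := by
  refine ⟨by simp [h.1], fun a b => ?_⟩
  have hc : ∀ c : Fin m, (c : ℕ) < w.length := fun c => h.1 ▸ c.isLt
  have getD_map : ∀ c : Fin m, (w.map (k - 1 - ·)).getD c 0 = k - 1 - w.getD c 0 := fun c => by
    rw [List.getD_eq_getElem _ _ (by simpa using hc c), List.getD_eq_getElem _ _ (hc c),
      List.getElem_map]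
  have hk : ∀ c : Fin m, w.getD c 0 < k := fun c =>
    hw _ (List.getD_eq_getElem w 0 (hc c) ▸ List.getElem_mem _)
  rw [getD_map, getD_map, PatCompl, PatCompl, Fin.rev_lt_rev, ← h.2 b a]
  have := hk a
  have := hk b
  omega

theorem contains_reverse_iff {L : List ℕ} : Contains (PatRev p) L.reverse ↔ Contains p L := by
  have of_contains : ∀ {m l} {p : Fin m → Fin l} {L : List ℕ},
      Contains p L → Contains (PatRev p) L.reverse :=
    fun ⟨w, hw, hp⟩ => ⟨w.reverse, List.reverse_infix.2 hw, hp.reverse⟩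
  refine ⟨fun h => ?_, of_contains⟩
  simpa only [patRev_patRev, List.reverse_reverse] using of_contains h

theorem forall_mem_map_compl_lt {L : List ℕ} (hL : ∀ y ∈ L, y < k) :
    ∀ y ∈ L.map (k - 1 - ·), y < k := by
  simp only [List.mem_map]
  rintro _ ⟨y, hy, rfl⟩
  have := hL y hy
  omega

theorem map_compl_map_compl {L : List ℕ} (hL : ∀ y ∈ L, y < k) :
    (L.map (k - 1 - ·)).map (k - 1 - ·) = L := by
  rw [List.map_map]
  conv_rhs => rw [← List.map_id L]
  refine List.map_congr_left fun y hy => ?_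
  have := hL y hy
  simp only [Function.comp, id]
  omega

theorem contains_map_compl_iff {L : List ℕ} (hL : ∀ y ∈ L, y < k) :
    Contains (PatCompl p) (L.map (k - 1 - ·)) ↔ Contains p L := by
  have of_contains : ∀ {m l} {p : Fin m → Fin l} {L : List ℕ}, (∀ y ∈ L, y < k) →
      Contains p L → Contains (PatCompl p) (L.map (k - 1 - ·)) :=
    fun hL ⟨w, hw, hp⟩ => ⟨_, hw.map _, hp.map_compl fun y hy => hL y (hw.subset hy)⟩
  refine ⟨fun h => ?_, of_contains hL⟩
  simpa only [patCompl_patCompl, map_compl_map_compl hL] using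
    of_contains (forall_mem_map_compl_lt hL) h

end Symmetries

def ofWord (σ : Fin n → Fin k) : List ℕ := List.ofFn fun i => (σ i : ℕ)

theorem ofWord_injective : Function.Injective (ofWord : (Fin n → Fin k) → List ℕ) :=
  fun _ _ h => funext fun i => Fin.ext (congrFun (List.ofFn_injective h) i)

def words (n k : ℕ) : Finset (List ℕ) := (univ : Finset (Fin n → Fin k)).image ofWord

theorem mem_words {L : List ℕ} : L ∈ words n k ↔ L.length = n ∧ ∀ y ∈ L, y < k := by
  constructor
  · intro h
    obtain ⟨σ, -, rfl⟩ := mem_image.1 h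
    exact ⟨by simp [ofWord], by simp [ofWord, List.mem_ofFn]⟩
  · rintro ⟨rfl, hL⟩
    refine mem_image.2 ⟨fun i : Fin L.length => ⟨L[i], hL _ (List.getElem_mem _)⟩, mem_univ _, ?_⟩
    simp [ofWord, List.ofFn_getElem]

theorem notMem_of_mem_words {A : List ℕ} (hA : A ∈ words n k) : k ∉ A :=
  fun hk => (mem_words.1 hA).2 k hk |>.false

theorem words_succ (n K : ℕ) :
    words n (K + 1) = words n K ∪ (range n).biUnion fun j =>
      (words j K ×ˢ words (n - 1 - j) (K + 1)).image fun AB => AB.1 ++ K :: AB.2 := by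
  ext L
  simp only [mem_union, mem_biUnion, mem_image, mem_product, mem_range, mem_words, Prod.exists]
  constructor
  · rintro ⟨hn, hL⟩
    by_cases hKL : K ∈ L
    · obtain ⟨A, B, hA, rfl, -⟩ := List.exists_erase_eq hKL
      simp only [List.length_append, List.length_cons] at hn
      refine .inr ⟨A.length, by omega, A, B, ⟨⟨rfl, fun y hy => ?_⟩, by omega,
        fun y hy => hL y (by simp [hy])⟩, rfl⟩
      exact lt_of_le_of_ne (Nat.le_of_lt_succ (hL y (by simp [hy]))) (by rintro rfl; exact hA hy)
    · exact .inl ⟨hn, fun y hy =>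
        lt_of_le_of_ne (Nat.le_of_lt_succ (hL y hy)) (by rintro rfl; exact hKL hy)⟩
  · rintro (⟨hn, hL⟩ | ⟨j, hj, A, B, ⟨⟨rfl, hA⟩, hB, hBK⟩, rfl⟩)
    · exact ⟨hn, fun y hy => (hL y hy).trans (Nat.lt_succ_self K)⟩
    · refine ⟨by simp; omega, fun y hy => ?_⟩
      rcases (by simpa only [List.mem_append, List.mem_cons] using hy) with hy | rfl | hy
      · exact (hA y hy).trans (Nat.lt_succ_self _)
      · exact Nat.lt_succ_self _
      · exact hBK y hy

theorem card_filter_words_succ (P : List ℕ → Prop) [DecidablePred P] (n K : ℕ) :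
    #{L ∈ words n (K + 1) | P L} = #{L ∈ words n K | P L} +
      ∑ j ∈ range n, #{AB ∈ words j K ×ˢ words (n - 1 - j) (K + 1) | P (AB.1 ++ K :: AB.2)} := by
  set glue : List ℕ × List ℕ → List ℕ := fun AB => AB.1 ++ K :: AB.2
  set pieces : ℕ → Finset (List ℕ × List ℕ) := fun j => words j K ×ˢ words (n - 1 - j) (K + 1)
  have hinj : Set.InjOn glue {AB | K ∉ AB.1} := fun AB hAB AB' hAB' h => by
    obtain ⟨h₁, h₂⟩ := List.append_cons_inj_of_notMem_left hAB hAB' h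
    exact Prod.ext h₁ h₂
  have hK : ∀ j, ∀ AB ∈ pieces j, K ∉ AB.1 := fun j AB h =>
    notMem_of_mem_words (mem_product.1 h).1
  have hdisj : Disjoint (words n K) ((range n).biUnion fun j => (pieces j).image glue) := by
    refine disjoint_left.2 fun L hL hL' => ?_
    obtain ⟨j, -, AB, -, rfl⟩ := by simpa only [mem_biUnion, mem_image] using hL'
    exact notMem_of_mem_words hL (by simp [glue])
  have hpair : (range n : Set ℕ).PairwiseDisjoint fun j => (pieces j).image glue := by
    intro j _ j' _ hne
    refine disjoint_left.2 fun L hL hL' => hne ?_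
    obtain ⟨AB, hAB, rfl⟩ := mem_image.1 hL
    obtain ⟨AB', hAB', h⟩ := mem_image.1 hL'
    rw [← (mem_words.1 (mem_product.1 hAB).1).1, ← (mem_words.1 (mem_product.1 hAB').1).1,
      hinj (hK j' AB' hAB') (hK j AB hAB) h]
  rw [words_succ, filter_union, card_union_of_disjoint (hdisj.mono (filter_subset _ _)
    (filter_subset _ _)), filter_biUnion, card_biUnion (hpair.mono fun j => filter_subset _ _)]
  congr 1
  refine sum_congr rfl fun j _ => ?_
  rw [filter_image, card_image_of_injOn (hinj.mono fun AB h => hK j AB (mem_filter.1 h).1)]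

theorem card_filter_product_of_iff {α β : Type*} {S : Finset α} {T : Finset β}
    {R : α × β → Prop} {P : α → Prop} {Q : β → Prop} [DecidablePred R] [DecidablePred P]
    [DecidablePred Q] (h : ∀ a ∈ S, ∀ b ∈ T, R (a, b) ↔ P a ∧ Q b) :
    #{ab ∈ S ×ˢ T | R ab} = #{a ∈ S | P a} * #{b ∈ T | Q b} := by
  rw [← card_product, ← filter_product]
  congr 1
  exact filter_congr fun ab hab => h ab.1 (mem_product.1 hab).1 ab.2 (mem_product.1 hab).2

theorem eq_of_convolution_rec {a b x y : ℕ → ℕ}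
    (hx : ∀ n, x n = b n + ∑ j ∈ range n, a j * x (n - 1 - j))
    (hy : ∀ n, y n = b n + ∑ j ∈ range n, a j * y (n - 1 - j)) (n : ℕ) : x n = y n := by
  induction n using Nat.strong_induction_on with
  | _ n ih =>
    rw [hx, hy]
    congr 1
    exact sum_congr rfl fun j hj => by rw [ih _ (by have := mem_range.1 hj; omega)]

noncomputable def countAvoiding (p : Fin m → Fin l) (n k : ℕ) : ℕ :=
  #{L ∈ words n k | ¬ Contains p L}

noncomputable def countAvoidingBelow (p : Fin m → Fin l) (n K : ℕ) : ℕ :=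
  #{L ∈ words n (K + 1) | ¬ ContainsBelow p K L}

noncomputable def countAvoidingShuffle (τ : Fin m₁ → Fin r₁) (ν : Fin m₂ → Fin r₂)
    (n k : ℕ) : ℕ :=
  #{L ∈ words n k | ¬ ContainsShufflePat τ ν L}

def WilfEquiv (p : Fin m → Fin l) (p' : Fin m' → Fin l') : Prop :=
  ∀ n k, countAvoiding p n k = countAvoiding p' n k

theorem countAvoidingBelow_eq (p : Fin m → Fin l) (n K : ℕ) :
    countAvoidingBelow p n K = countAvoiding p n K +
      ∑ j ∈ range n, countAvoiding p j K * countAvoidingBelow p (n - 1 - j) K := by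
  rw [countAvoidingBelow, card_filter_words_succ]
  congr 1
  · exact congrArg card <| filter_congr fun L hL => not_congr
      ⟨ContainsBelow.contains, (·.containsBelow (mem_words.1 hL).2)⟩
  · refine sum_congr rfl fun j _ => card_filter_product_of_iff fun A hA B _ => ?_
    rw [containsBelow_append_cons (mem_words.1 hA).2, not_or]

theorem countAvoidingBelow_eq_of_wilfEquiv {p : Fin m → Fin l} {p' : Fin m' → Fin l'}
    (h : WilfEquiv p p') (K n : ℕ) : countAvoidingBelow p n K = countAvoidingBelow p' n K :=
  eq_of_convolution_rec (y := (countAvoidingBelow p' · K)) (countAvoidingBelow_eq p · K)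
    (fun n => by rw [countAvoidingBelow_eq p' n K]; simp only [h _ K]) n

section ShuffleCount

variable (τ : Fin m₁ → Fin r₁) (ν : Fin m₂ → Fin r₂)

theorem countAvoidingShuffle_zero (n : ℕ) : countAvoidingShuffle τ ν n 0 = #(words n 0) :=
  congrArg card <| filter_true_of_mem fun L hL ⟨_, x, _, hL', _⟩ =>
    Nat.not_lt_zero x <| (mem_words.1 hL).2 x (by simp [hL'])

theorem countAvoidingShuffle_eq_countAvoiding_add (n k : ℕ) :
    countAvoidingShuffle τ ν n k =
      countAvoiding τ n k + #{L ∈ words n k | Contains τ L ∧ ¬ ContainsShufflePat τ ν L} := by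
  rw [countAvoidingShuffle, ← card_filter_add_card_filter_not (Contains τ), filter_filter,
    filter_filter, add_comm]
  congr 2
  · exact filter_congr fun L _ => ⟨And.right, fun h => ⟨fun hs => h hs.contains, h⟩⟩
  · exact filter_congr fun L _ => and_comm

theorem countAvoidingShuffle_succ (n K : ℕ) :
    countAvoidingShuffle τ ν n (K + 1) =
      (countAvoidingShuffle τ ν n K + ∑ j ∈ range n,
        #{A ∈ words j K | Contains τ A ∧ ¬ ContainsShufflePat τ ν A} *
          countAvoidingBelow ν (n - 1 - j) K) +
      ∑ j ∈ range n, countAvoiding τ j K * countAvoidingShuffle τ ν (n - 1 - j) (K + 1) := by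
  rw [countAvoidingShuffle, card_filter_words_succ, add_assoc, ← sum_add_distrib]
  congr 1
  refine sum_congr rfl fun j _ => ?_
  rw [← card_filter_add_card_filter_not (fun AB => Contains τ AB.1), filter_filter,
    filter_filter]
  congr 1 <;> refine card_filter_product_of_iff fun A hA B hB => ?_
  all_goals
    have hB' : ∀ y ∈ B, y ≤ K := fun y hy => Nat.le_of_lt_succ ((mem_words.1 hB).2 y hy)
    rw [containsShufflePat_append_cons (mem_words.1 hA).2 hB']
    have hA : ContainsShufflePat τ ν A → Contains τ A := ContainsShufflePat.contains
    have hB : ContainsShufflePat τ ν B → ContainsBelow ν K B := (·.containsBelow hB')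
    tauto

end ShuffleCount

theorem countAvoidingShuffle_eq_of_wilfEquiv {τ : Fin m₁ → Fin r₁} {ν : Fin m₂ → Fin r₂}
    {τ' : Fin m₁' → Fin r₁'} {ν' : Fin m₂' → Fin r₂'} (hτ : WilfEquiv τ τ') (hν : WilfEquiv ν ν')
    (n k : ℕ) : countAvoidingShuffle τ ν n k = countAvoidingShuffle τ' ν' n k := by
  induction k generalizing n with
  | zero => rw [countAvoidingShuffle_zero, countAvoidingShuffle_zero]
  | succ K ih =>
    have hmid : ∀ j, #{A ∈ words j K | Contains τ A ∧ ¬ ContainsShufflePat τ ν A} =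
        #{A ∈ words j K | Contains τ' A ∧ ¬ ContainsShufflePat τ' ν' A} := fun j => by
      have := countAvoidingShuffle_eq_countAvoiding_add τ ν j K
      have := countAvoidingShuffle_eq_countAvoiding_add τ' ν' j K
      have := ih j
      have := hτ j K
      omega
    refine eq_of_convolution_rec (y := (countAvoidingShuffle τ' ν' · (K + 1)))
      (countAvoidingShuffle_succ τ ν · K) (fun n => ?_) n
    rw [countAvoidingShuffle_succ]
    simp only [ih, hmid, hτ _ K, countAvoidingBelow_eq_of_wilfEquiv hν]

section Wilf

variable {p : Fin m → Fin l}

theorem WilfEquiv.trans {p' : Fin m' → Fin l'} {p'' : Fin m'' → Fin l''} (h : WilfEquiv p p')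
    (h' : WilfEquiv p' p'') : WilfEquiv p p'' :=
  fun n k => (h n k).trans (h' n k)

theorem countAvoiding_eq_of_involution {p' : Fin m' → Fin l'} (ι : List ℕ → List ℕ)
    (hmem : ∀ L ∈ words n k, ι L ∈ words n k) (hinv : ∀ L ∈ words n k, ι (ι L) = L)
    (h : ∀ L ∈ words n k, Contains p' (ι L) ↔ Contains p L) :
    countAvoiding p n k = countAvoiding p' n k := by
  refine card_nbij' ι ι (fun L hL => ?_) (fun L hL => ?_)
    (fun L hL => hinv L (mem_filter.1 hL).1) (fun L hL => hinv L (mem_filter.1 hL).1)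
  · obtain ⟨hL, hp⟩ := mem_filter.1 hL
    exact mem_filter.2 ⟨hmem L hL, by rwa [h L hL]⟩
  · obtain ⟨hL, hp⟩ := mem_filter.1 hL
    exact mem_filter.2 ⟨hmem L hL, by rwa [← h _ (hmem L hL), hinv L hL]⟩

theorem wilfEquiv_patRev (p : Fin m → Fin l) : WilfEquiv p (PatRev p) := fun _ _ =>
  countAvoiding_eq_of_involution List.reverse
    (fun L hL => by simpa [mem_words] using hL) (fun L _ => L.reverse_reverse)
    (fun _ _ => contains_reverse_iff)

theorem wilfEquiv_patCompl (p : Fin m → Fin l) : WilfEquiv p (PatCompl p) := fun _ k =>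
  countAvoiding_eq_of_involution (List.map (k - 1 - ·))
    (fun L hL => mem_words.2 ⟨by simpa using (mem_words.1 hL).1,
      forall_mem_map_compl_lt (mem_words.1 hL).2⟩)
    (fun L hL => map_compl_map_compl (mem_words.1 hL).2)
    (fun L hL => contains_map_compl_iff (mem_words.1 hL).2)

theorem _root_.IsTrivialBij.wilfEquiv {f : (Fin m → Fin l) → (Fin m → Fin l)}
    (hf : IsTrivialBij f) (p : Fin m → Fin l) : WilfEquiv p (f p) := by
  rcases hf with rfl | rfl | rfl | rfl
  · exact fun _ _ => rfl
  · exact wilfEquiv_patRev p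
  · exact wilfEquiv_patCompl p
  · exact (wilfEquiv_patCompl p).trans (wilfEquiv_patRev _)

end Wilf

section Positions

variable {p : Fin m → Fin l}

def MatchesAt (p : Fin m → Fin l) (L : List ℕ) (i : ℕ) : Prop :=
  ∀ a b : Fin m, L.getD (i + a) 0 < L.getD (i + b) 0 ↔ p a < p b

theorem matchesAt_congr {L L' : List ℕ} {i i' : ℕ}
    (h : ∀ a : Fin m, L.getD (i + a) 0 = L'.getD (i' + a) 0) :
    MatchesAt p L i ↔ MatchesAt p L' i' := by
  simp only [MatchesAt, h]

theorem containsBelow_iff_exists_matchesAt {x : ℕ} {L : List ℕ} :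
    ContainsBelow p x L ↔
      ∃ i, i + m ≤ L.length ∧ MatchesAt p L i ∧ ∀ a : Fin m, L.getD (i + a) 0 < x := by
  have getD_window : ∀ {i} (a : Fin m), ((L.drop i).take m).getD a 0 = L.getD (i + a) 0 :=
    fun a => by simp [List.getD_eq_getElem?_getD, a.isLt]
  have mem_window : ∀ {i y}, i + m ≤ L.length →
      (y ∈ (L.drop i).take m ↔ ∃ a : Fin m, L.getD (i + a) 0 = y) := by
    intro i y hi
    simp only [List.mem_iff_getElem, List.length_take, List.length_drop, List.getElem_take,
      List.getElem_drop]
    constructor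
    · rintro ⟨a, ha, rfl⟩
      exact ⟨⟨a, by omega⟩, List.getD_eq_getElem _ _ _⟩
    · rintro ⟨a, rfl⟩
      exact ⟨a, by omega, (List.getD_eq_getElem _ _ _).symm⟩
  constructor
  · rintro ⟨w, hw, ⟨hlen, hp⟩, hlt⟩
    obtain ⟨i, hi, hwi⟩ := List.infix_iff_exists_drop_take.1 hw
    rw [← hwi, hlen] at hp hlt
    rw [hlen] at hi
    refine ⟨i, hi, fun a b => ?_, fun a => hlt _ ((mem_window hi).2 ⟨a, rfl⟩)⟩
    rw [← getD_window, ← getD_window]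
    exact hp a b
  · rintro ⟨i, hi, hp, hlt⟩
    refine ⟨(L.drop i).take m, List.infix_iff_exists_drop_take.2 ⟨i, by simp; omega, by simp⟩,
      ⟨by simp; omega, fun a b => by rw [getD_window, getD_window]; exact hp a b⟩,
      fun y hy => ?_⟩
    obtain ⟨a, rfl⟩ := (mem_window hi).1 hy
    exact hlt a

theorem getD_append_cons_length {A B : List ℕ} {x : ℕ} :
    (A ++ x :: B).getD A.length 0 = x := by
  simp

theorem getD_append_cons_add {A B : List ℕ} {x : ℕ} (r : ℕ) :
    (A ++ x :: B).getD (A.length + 1 + r) 0 = B.getD r 0 := by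
  rw [List.getD_append_right _ _ _ _ (by omega), show A.length + 1 + r - A.length = r + 1 by omega,
    List.getD_cons_succ]

theorem containsBelow_iff_exists_matchesAt_append_cons_left {A B : List ℕ} {x y : ℕ} :
    ContainsBelow p y A ↔ ∃ i, i + m ≤ A.length ∧ MatchesAt p (A ++ x :: B) i ∧
      ∀ a : Fin m, (A ++ x :: B).getD (i + a) 0 < y := by
  rw [containsBelow_iff_exists_matchesAt]
  refine exists_congr fun i => and_congr_right fun hi => ?_
  have h : ∀ a : Fin m, (A ++ x :: B).getD (i + a) 0 = A.getD (i + a) 0 :=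
    fun a => List.getD_append _ _ _ _ (by omega)
  simp only [matchesAt_congr h, h]

theorem containsBelow_iff_exists_matchesAt_append_cons_right {A B : List ℕ} {x y : ℕ} :
    ContainsBelow p y B ↔ ∃ q, A.length < q ∧ q + m ≤ (A ++ x :: B).length ∧
      MatchesAt p (A ++ x :: B) q ∧ ∀ a : Fin m, (A ++ x :: B).getD (q + a) 0 < y := by
  have h : ∀ j (a : Fin m), (A ++ x :: B).getD (A.length + 1 + j + a) 0 = B.getD (j + a) 0 :=
    fun j a => by rw [Nat.add_assoc _ j, getD_append_cons_add]
  rw [containsBelow_iff_exists_matchesAt]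
  constructor
  · rintro ⟨j, hj, hp, hlt⟩
    exact ⟨A.length + 1 + j, by omega, by simp; omega, (matchesAt_congr (h j)).2 hp,
      fun a => h j a ▸ hlt a⟩
  · rintro ⟨q, hq, hqL, hp, hlt⟩
    obtain ⟨j, rfl⟩ : ∃ j, q = A.length + 1 + j := ⟨q - A.length - 1, by omega⟩
    exact ⟨j, by simp at hqL; omega, (matchesAt_congr (h j)).1 hp, fun a => h j a ▸ hlt a⟩

theorem containsShufflePat_iff_exists_index {τ : Fin m₁ → Fin r₁} {ν : Fin m₂ → Fin r₂}
    {L : List ℕ} :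
    ContainsShufflePat τ ν L ↔ ∃ i pp q, i + m₁ ≤ pp ∧ pp < q ∧ q + m₂ ≤ L.length ∧
      MatchesAt τ L i ∧ MatchesAt ν L q ∧ (∀ a : Fin m₁, L.getD (i + a) 0 < L.getD pp 0) ∧
        ∀ b : Fin m₂, L.getD (q + b) 0 < L.getD pp 0 := by
  constructor
  · rintro ⟨A, x, B, rfl, hA, hB⟩
    obtain ⟨i, hi, hτ, hlt₁⟩ := containsBelow_iff_exists_matchesAt_append_cons_left.1 hA
    obtain ⟨q, hq, hqL, hν, hlt₂⟩ := containsBelow_iff_exists_matchesAt_append_cons_right.1 hB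
    refine ⟨i, A.length, q, hi, hq, hqL, hτ, hν, ?_, ?_⟩ <;>
      simpa only [getD_append_cons_length]
  · rintro ⟨i, pp, q, hi, hq, hqL, hτ, hν, hlt₁, hlt₂⟩
    obtain ⟨A, x, B, rfl, rfl⟩ :=
      List.exists_eq_append_cons_of_lt_length (show pp < L.length by omega)
    rw [getD_append_cons_length] at hlt₁ hlt₂
    exact ⟨A, x, B, rfl,
      containsBelow_iff_exists_matchesAt_append_cons_left.2 ⟨i, hi, hτ, hlt₁⟩,
      containsBelow_iff_exists_matchesAt_append_cons_right.2 ⟨q, hq, hqL, hν, hlt₂⟩⟩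

end Positions

theorem getD_ofWord (σ : Fin n → Fin k) {r : ℕ} (hr : r < n) :
    (ofWord σ).getD r 0 = σ ⟨r, hr⟩ := by
  simp [ofWord, List.getD_eq_getElem?_getD, hr]

theorem occursAt_iff_matchesAt (p : Fin m → Fin l) (σ : Fin n → Fin k) (i : ℕ) :
    OccursAt p σ i ↔ i + m ≤ n ∧ MatchesAt p (ofWord σ) i := by
  have key : ∀ h : i + m ≤ n, ∀ a b : Fin m,
      (σ ⟨i + a, by omega⟩ < σ ⟨i + b, by omega⟩ ↔
        (ofWord σ).getD (i + a) 0 < (ofWord σ).getD (i + b) 0) := fun h a b => by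
    rw [getD_ofWord, getD_ofWord, Fin.lt_def]
  exact ⟨fun ⟨h, hp⟩ => ⟨h, fun a b => (key h a b).symm.trans (hp a b)⟩,
    fun ⟨h, hp⟩ => ⟨h, fun a b => (key h a b).trans (hp a b)⟩⟩

theorem containsShuffle_iff (τ : Fin m₁ → Fin r₁) (ν : Fin m₂ → Fin r₂) (σ : Fin n → Fin k) :
    ContainsShuffle τ ν σ ↔ ContainsShufflePat τ ν (ofWord σ) := by
  have hn : (ofWord σ).length = n := by simp [ofWord]
  rw [containsShufflePat_iff_exists_index, hn]
  constructor
  · rintro ⟨i, pp, q, hp, hi, hq, hqn, hτ, hν, hlt⟩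
    refine ⟨i, pp, q, hi, hq, hqn, ((occursAt_iff_matchesAt τ σ i).1 hτ).2,
      ((occursAt_iff_matchesAt ν σ q).1 hν).2, fun a => ?_, fun b => ?_⟩
    · rw [getD_ofWord σ (by omega), getD_ofWord σ hp]
      exact hlt _ _ (.inl ⟨by omega, by omega⟩)
    · rw [getD_ofWord σ (by omega), getD_ofWord σ hp]
      exact hlt _ _ (.inr ⟨by omega, by omega⟩)
  · rintro ⟨i, pp, q, hi, hq, hqn, hτ, hν, hlt₁, hlt₂⟩
    have hp : pp < n := by omega
    refine ⟨i, pp, q, hp, hi, hq, hqn, (occursAt_iff_matchesAt τ σ i).2 ⟨by omega, hτ⟩,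
      (occursAt_iff_matchesAt ν σ q).2 ⟨hqn, hν⟩, ?_⟩
    rintro r hr (⟨hir, hri⟩ | ⟨hqr, hrq⟩)
    · have h := hlt₁ ⟨r - i, by omega⟩
      rwa [Nat.add_sub_cancel' hir, getD_ofWord σ hr, getD_ofWord σ hp] at h
    · have h := hlt₂ ⟨r - q, by omega⟩
      rwa [Nat.add_sub_cancel' hqr, getD_ofWord σ hr, getD_ofWord σ hp] at h

theorem card_not_containsShuffle (τ : Fin m₁ → Fin r₁) (ν : Fin m₂ → Fin r₂) (n k : ℕ) :
    Nat.card {σ : Fin n → Fin k // ¬ ContainsShuffle τ ν σ} = countAvoidingShuffle τ ν n k := by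
  rw [Nat.card_eq_fintype_card, Fintype.card_subtype, countAvoidingShuffle, words, filter_image,
    card_image_of_injective _ ofWord_injective]
  simp only [containsShuffle_iff]

end ListWord

theorem stmt6_general (m₁ r₁ m₂ r₂ : ℕ) (τ : Fin m₁ → Fin r₁) (ν : Fin m₂ → Fin r₂)
    (f₁ : (Fin m₁ → Fin r₁) → (Fin m₁ → Fin r₁))
    (f₂ : (Fin m₂ → Fin r₂) → (Fin m₂ → Fin r₂))
    (hf₁ : IsTrivialBij f₁) (hf₂ : IsTrivialBij f₂)
    (n k : ℕ) :
    Nat.card {σ : Fin n → Fin k // ¬ ContainsShuffle τ ν σ} =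
      Nat.card {σ : Fin n → Fin k // ¬ ContainsShuffle (f₁ τ) (f₂ ν) σ} := by
  rw [ListWord.card_not_containsShuffle, ListWord.card_not_containsShuffle]
  exact ListWord.countAvoidingShuffle_eq_of_wilfEquiv (hf₁.wilfEquiv τ) (hf₂.wilfEquiv ν) n k

theorem stmt6 (m₁ r₁ m₂ r₂ : ℕ) (τ : Fin m₁ → Fin r₁) (ν : Fin m₂ → Fin r₂)
    (f₁ : (Fin m₁ → Fin r₁) → (Fin m₁ → Fin r₁))
    (f₂ : (Fin m₂ → Fin r₂) → (Fin m₂ → Fin r₂))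
    (hf₁ : IsTrivialBij f₁) (hf₂ : IsTrivialBij f₂)
    (n k : ℕ) (hk : 1 ≤ k) :
    Nat.card {σ : Fin n → Fin k // ¬ ContainsShuffle τ ν σ} =
      Nat.card {σ : Fin n → Fin k // ¬ ContainsShuffle (f₁ τ) (f₂ ν) σ} :=
  stmt6_general m₁ r₁ m₂ r₂ τ ν f₁ f₂ hf₁ hf₂ n k
end

section
/- Let τ and ν be subword patterns. Then for every n ≥ 0 and k ≥ 1, the number of k-ary words of length n avoiding the shuffle pattern τ-ℓ-ν equals the number of k-ary words of length n avoiding the shuffle pattern ν-ℓ-τ. -/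
/-!
Induction on the alphabet, adding a letter `t` larger than all previous ones. Cut a word over the
new alphabet at the first occurrence of `t`, as `u ++ t :: v` with `t ∉ u`: it contains the
shuffle pattern `P-ℓ-Q` iff `u` or `v` does, or `u` contains `P` and `v` contains `Q` in letters
below `t`. For the generating functions by length this gives
  `(1 - x a_P) (1 - x a_Q) S' = S - x a_P a_Q`,
where `a_P`, `a_Q` count the words over the old alphabet avoiding `P`, `Q`, and `S`, `S'` count
the `P-ℓ-Q`-avoiders over the old and the new alphabet. The right-hand side is symmetric in `P`
and `Q` by induction, and the factor on the left is a unit. Nothing is used about the patterns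
beyond their being properties of factors (contiguous subwords).
-/

namespace List

variable {α : Type*}

def HasFactor (P : List α → Prop) (w : List α) : Prop :=
  ∃ x, x <:+: w ∧ P x

def HasFactorBelow [LT α] (P : List α → Prop) (m : α) (w : List α) : Prop :=
  ∃ x, x <:+: w ∧ P x ∧ ∀ c ∈ x, c < m

def HasShuffle [LT α] (P Q : List α → Prop) (w : List α) : Prop :=
  ∃ u m v, w = u ++ m :: v ∧ HasFactorBelow P m u ∧ HasFactorBelow Q m v

def IsOccurrence {β : Type*} [LT α] [LT β] {m : ℕ} (p : Fin m → β) (x : List α) : Prop :=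
  ∃ f : Fin m → α, x = ofFn f ∧ ∀ a b, f a < f b ↔ p a < p b

theorem IsInfix.infix_or_infix_of_notMem {x u v : List α} {t : α} (h : x <:+: u ++ t :: v)
    (ht : t ∉ x) : x <:+: u ∨ x <:+: v := by
  rcases infix_append_iff.1 h with h | h | ⟨x₁, x₂, rfl, h₁, h₂⟩
  · exact .inl h
  · rcases infix_cons_iff.1 h with h | h
    · rcases prefix_cons_iff.1 h with rfl | ⟨y, rfl, -⟩
      · exact .inl nil_infix
      · exact absurd mem_cons_self ht
    · exact .inr h
  · rcases prefix_cons_iff.1 h₂ with rfl | ⟨y, rfl, -⟩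
    · exact .inl (by simpa using h₁.isInfix)
    · exact absurd (by simp) ht

theorem infix_append_cons_right (u v : List α) (t : α) : v <:+: u ++ t :: v :=
  ((suffix_cons t v).trans (suffix_append u _)).isInfix

theorem eq_of_append_cons_eq_of_notMem [DecidableEq α] {u u' v v' : List α} {t : α}
    (hu : t ∉ u) (hu' : t ∉ u') (h : u ++ t :: v = u' ++ t :: v') : u = u' ∧ v = v' := by
  have hlen : u.length = u'.length := by
    simpa [idxOf_append, hu, hu'] using congrArg (idxOf t) h
  obtain ⟨rfl, hv⟩ := append_inj h hlen
  exact ⟨rfl, (cons_inj_right t).1 hv⟩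

section Preorder

variable [Preorder α] {P Q : List α → Prop} {m t : α} {u v w : List α}

theorem HasFactorBelow.hasFactor (h : HasFactorBelow P m w) : HasFactor P w :=
  let ⟨x, hx, hP, _⟩ := h
  ⟨x, hx, hP⟩

theorem HasFactorBelow.mono {m' : α} (h : HasFactorBelow P m u) (hu : u <:+: w) (hm : m ≤ m') :
    HasFactorBelow P m' w :=
  let ⟨x, hx, hP, hlt⟩ := h
  ⟨x, hx.trans hu, hP, fun c hc => (hlt c hc).trans_le hm⟩

theorem hasFactorBelow_iff_hasFactor (hw : ∀ c ∈ w, c < m) :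
    HasFactorBelow P m w ↔ HasFactor P w :=
  ⟨HasFactorBelow.hasFactor, fun ⟨x, hx, hP⟩ => ⟨x, hx, hP, fun c hc => hw c (hx.subset hc)⟩⟩

theorem hasFactorBelow_append_cons (hm : m ≤ t) :
    HasFactorBelow P m (u ++ t :: v) ↔ HasFactorBelow P m u ∨ HasFactorBelow P m v := by
  constructor
  · rintro ⟨x, hx, hP, hlt⟩
    have ht : t ∉ x := fun ht => (hlt t ht).not_ge hm
    exact (hx.infix_or_infix_of_notMem ht).imp (⟨x, ·, hP, hlt⟩) (⟨x, ·, hP, hlt⟩)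
  · rintro (h | h)
    · exact h.mono infix_append_left le_rfl
    · exact h.mono (infix_append_cons_right _ _ _) le_rfl

theorem HasShuffle.hasFactor_left (h : HasShuffle P Q w) : HasFactor P w :=
  let ⟨_, _, _, hw, ⟨x, hx, hP, _⟩, _⟩ := h
  ⟨x, hx.trans (hw ▸ infix_append_left), hP⟩

theorem HasShuffle.hasFactorBelow_right (hw : ∀ c ∈ w, c ≤ t) (h : HasShuffle P Q w) :
    HasFactorBelow Q t w := by
  obtain ⟨u, m, v, rfl, -, hQ⟩ := h
  exact hQ.mono (infix_append_cons_right _ _ _) (hw m (by simp))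

theorem hasShuffle_append_cons (hu : ∀ c ∈ u, c < t) (hv : ∀ c ∈ v, c ≤ t) :
    HasShuffle P Q (u ++ t :: v) ↔
      HasShuffle P Q u ∨ HasShuffle P Q v ∨ HasFactor P u ∧ HasFactorBelow Q t v := by
  constructor
  · rintro ⟨u', m, v', hw, hP, hQ⟩
    simp only [append_eq_append_iff, cons_eq_append_iff, cons_eq_cons] at hw
    -- the cases, in order: `m = t`, `m` in `v`, `m = t`, `m` in `u`
    rcases hw with ⟨_, rfl, ⟨rfl, rfl, rfl⟩ | ⟨w, rfl, rfl⟩⟩ |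
      ⟨_, rfl, ⟨rfl, rfl, rfl⟩ | ⟨w, rfl, rfl⟩⟩
    · exact .inr (.inr ⟨by simpa using hP.hasFactor, hQ⟩)
    · have hm := hv m (by simp)
      rcases (hasFactorBelow_append_cons hm).1 hP with hP | hP
      · exact .inr (.inr ⟨hP.hasFactor, hQ.mono (infix_append_cons_right _ _ _) hm⟩)
      · exact .inr (.inl ⟨w, m, v', rfl, hP, hQ⟩)
    · exact .inr (.inr ⟨by simpa using hP.hasFactor, hQ⟩)
    · have hm := (hu m (by simp)).le
      rcases (hasFactorBelow_append_cons hm).1 hQ with hQ | hQ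
      · exact .inl ⟨u', m, w, rfl, hP, hQ⟩
      · exact .inr (.inr ⟨(hP.mono infix_append_left le_rfl).hasFactor, hQ.mono infix_rfl hm⟩)
  · rintro (⟨u', m, v', rfl, hP, hQ⟩ | ⟨u', m, v', rfl, hP, hQ⟩ | ⟨hP, hQ⟩)
    · exact ⟨u', m, v' ++ t :: v, by simp, hP, hQ.mono infix_append_left le_rfl⟩
    · exact ⟨u ++ t :: u', m, v', by simp, hP.mono (infix_append_cons_right _ _ _) le_rfl, hQ⟩
    · exact ⟨u, t, v, rfl, (hasFactorBelow_iff_hasFactor hu).2 hP, hQ⟩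

end Preorder

end List

open Finset PowerSeries

theorem Finset.card_filter_product_eq {β γ : Type*} (X : Finset β) (Y : Finset γ)
    {R : β → γ → Prop} {Q₁ Q₂ : β → Prop} {R₁ R₂ : γ → Prop} [DecidablePred Q₁]
    [DecidablePred Q₂] [DecidablePred R₁] [DecidablePred R₂] [∀ x y, Decidable (R x y)]
    (hQ : ∀ x, Q₁ x → ¬Q₂ x) (hR : ∀ x ∈ X, ∀ y ∈ Y, R x y ↔ Q₁ x ∧ R₁ y ∨ Q₂ x ∧ R₂ y) :
    #{z ∈ X ×ˢ Y | R z.1 z.2} =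
      #{x ∈ X | Q₁ x} * #{y ∈ Y | R₁ y} + #{x ∈ X | Q₂ x} * #{y ∈ Y | R₂ y} := by
  classical
  rw [filter_congr fun z hz => hR z.1 (mem_product.1 hz).1 z.2 (mem_product.1 hz).2, filter_or,
    card_union_of_disjoint, filter_product, filter_product, card_product, card_product]
  exact disjoint_filter.2 fun z _ h₁ h₂ => hQ z.1 h₁.1 h₂.1

section Words

open scoped Classical

variable {α : Type*} [DecidableEq α] {A : Finset α} {t : α} {n : ℕ} {w : List α}

def words (A : Finset α) (n : ℕ) : Finset (List α) :=
  (Fintype.piFinset fun _ : Fin n => A).image List.ofFn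

theorem mem_words : w ∈ words A n ↔ w.length = n ∧ ∀ c ∈ w, c ∈ A := by
  simp only [words, mem_image, Fintype.mem_piFinset]
  constructor
  · rintro ⟨f, hf, rfl⟩
    simpa [List.mem_ofFn] using hf
  · rintro ⟨rfl, hw⟩
    exact ⟨fun i => w[i], fun i => hw _ (List.getElem_mem _), List.ofFn_getElem⟩

theorem words_zero : words A 0 = {[]} := by
  ext w
  simp only [mem_words, mem_singleton, List.length_eq_zero_iff]
  exact ⟨And.left, by rintro rfl; simp⟩

theorem filter_notMem_words_insert (ht : t ∉ A) :
    {w ∈ words (insert t A) n | t ∉ w} = words A n := by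
  ext w
  simp only [mem_filter, mem_words, mem_insert]
  constructor
  · rintro ⟨⟨hn, hw⟩, htw⟩
    exact ⟨hn, fun c hc => (hw c hc).resolve_left (by rintro rfl; exact htw hc)⟩
  · rintro ⟨hn, hw⟩
    exact ⟨⟨hn, fun c hc => .inr (hw c hc)⟩, fun htw => ht (hw t htw)⟩

theorem card_filter_mem_words_insert_succ (ht : t ∉ A) (P : List α → Prop) (m : ℕ) :
    #{w ∈ words (insert t A) (m + 1) | t ∈ w ∧ P w} =
      ∑ p ∈ antidiagonal m,
        #{x ∈ words A p.1 ×ˢ words (insert t A) p.2 | P (x.1 ++ t :: x.2)} := by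
  rw [← card_sigma]
  symm
  apply card_nbij (fun x => x.2.1 ++ t :: x.2.2)
  · rintro ⟨p, u, v⟩ h
    simp only [coe_sigma, Set.mem_sigma_iff, mem_coe, HasAntidiagonal.mem_antidiagonal,
      mem_filter, mem_product, mem_words, mem_insert] at h ⊢
    obtain ⟨hp, ⟨⟨hu, hA⟩, hv, hB⟩, hP⟩ := h
    refine ⟨⟨by simp; omega, ?_⟩, by simp, hP⟩
    simp only [List.mem_append, List.mem_cons]
    rintro c (hc | rfl | hc)
    · exact .inr (hA c hc)
    · exact .inl rfl
    · exact hB c hc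
  · rintro ⟨⟨a, b⟩, u, v⟩ h ⟨⟨a', b'⟩, u', v'⟩ h' huv
    simp only [coe_sigma, Set.mem_sigma_iff, mem_coe, HasAntidiagonal.mem_antidiagonal,
      mem_filter, mem_product, mem_words] at h h' huv
    obtain ⟨-, ⟨⟨rfl, hu⟩, rfl, -⟩, -⟩ := h
    obtain ⟨-, ⟨⟨rfl, hu'⟩, rfl, -⟩, -⟩ := h'
    obtain ⟨rfl, rfl⟩ :=
      List.eq_of_append_cons_eq_of_notMem (fun h => ht (hu t h)) (fun h => ht (hu' t h)) huv
    rfl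
  · rintro w hw
    simp only [coe_filter, Set.mem_ofPred_eq, mem_words] at hw
    obtain ⟨⟨hn, hw⟩, htw, hP⟩ := hw
    obtain ⟨u, v, htu, rfl, -⟩ := List.exists_erase_eq htw
    refine ⟨⟨(u.length, v.length), u, v⟩, ?_, rfl⟩
    simp only [coe_sigma, Set.mem_sigma_iff, mem_coe, HasAntidiagonal.mem_antidiagonal,
      mem_filter, mem_product, mem_words]
    simp only [List.length_append, List.length_cons, List.mem_append, List.mem_cons] at hn hw
    refine ⟨by omega, ⟨⟨trivial, fun c hc => ?_⟩, trivial, fun c hc => hw c (.inr (.inr hc))⟩, hP⟩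
    exact (mem_insert.1 (hw c (.inl hc))).resolve_left (by rintro rfl; exact htu hc)

noncomputable def wordGF (A : Finset α) (P : List α → Prop) : PowerSeries ℤ :=
  PowerSeries.mk fun n => #{w ∈ words A n | P w}

variable {P P' Q₁ Q₂ R₁ R₂ : List α → Prop}

theorem coeff_wordGF : coeff n (wordGF A P) = #{w ∈ words A n | P w} := by
  simp [wordGF]

theorem wordGF_congr (h : ∀ w, (∀ c ∈ w, c ∈ A) → (P w ↔ P' w)) :
    wordGF A P = wordGF A P' := by
  ext n
  simp only [coeff_wordGF]
  congr 2
  exact filter_congr fun w hw => h w (mem_words.1 hw).2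

theorem wordGF_false : wordGF A (fun _ => False) = 0 := by
  ext n
  simp [coeff_wordGF]

theorem wordGF_or (h : ∀ w, Q₁ w → ¬Q₂ w) :
    wordGF A (fun w => Q₁ w ∨ Q₂ w) = wordGF A Q₁ + wordGF A Q₂ := by
  ext n
  simp only [coeff_wordGF, map_add]
  rw [← Nat.cast_add, ← card_union_of_disjoint (disjoint_filter.2 fun w _ => h w), ← filter_or]
  congr

theorem wordGF_insert (ht : t ∉ A) (hQ : ∀ u, Q₁ u → ¬Q₂ u)
    (hP : ∀ u v, (∀ c ∈ u, c ∈ A) → (∀ c ∈ v, c ∈ insert t A) →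
      (P (u ++ t :: v) ↔ Q₁ u ∧ R₁ v ∨ Q₂ u ∧ R₂ v)) :
    wordGF (insert t A) P = wordGF A P +
      X * (wordGF A Q₁ * wordGF (insert t A) R₁ + wordGF A Q₂ * wordGF (insert t A) R₂) := by
  ext (_ | m)
  · rw [map_add, coeff_zero_X_mul, add_zero, coeff_wordGF, coeff_wordGF, words_zero, words_zero]
  have hsplit : #{w ∈ words (insert t A) (m + 1) | P w} =
      #{w ∈ words A (m + 1) | P w} + #{w ∈ words (insert t A) (m + 1) | t ∈ w ∧ P w} := by
    rw [← card_filter_add_card_filter_not (s := {w ∈ words (insert t A) (m + 1) | P w})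
      (fun w => t ∉ w), ← filter_notMem_words_insert ht, filter_filter, filter_filter,
      filter_filter]
    simp only [and_comm, not_not]
  rw [map_add, coeff_succ_X_mul, map_add, coeff_mul, coeff_mul, ← sum_add_distrib]
  simp only [coeff_wordGF]
  rw [hsplit, card_filter_mem_words_insert_succ ht, Nat.cast_add, Nat.cast_sum]
  congr 1
  refine sum_congr rfl fun p _ => ?_
  rw [card_filter_product_eq _ _ hQ fun u hu v hv => hP u v (mem_words.1 hu).2 (mem_words.1 hv).2]
  push_cast
  rfl

end Words

section Shuffle

open List

variable {α : Type*} [DecidableEq α] (P Q : List α → Prop)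

section Preorder

variable [Preorder α] {A : Finset α} {t : α}

theorem wordGF_insert_not_hasFactorBelow (ht : ∀ a ∈ A, a < t) :
    wordGF (insert t A) (¬HasFactorBelow Q t ·) = wordGF A (¬HasFactor Q ·) +
      X * (wordGF A (¬HasFactor Q ·) * wordGF (insert t A) (¬HasFactorBelow Q t ·)) := by
  have hu : ∀ u : List α, (∀ c ∈ u, c ∈ A) → ∀ c ∈ u, c < t := fun u hu c hc => ht c (hu c hc)
  have h := wordGF_insert (fun h => (ht t h).false) (fun _ _ => id)
    (P := (¬HasFactorBelow Q t ·)) (Q₁ := (¬HasFactor Q ·)) (R₁ := (¬HasFactorBelow Q t ·))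
    (Q₂ := fun _ => False) (R₂ := fun _ => False) fun u v hu' _ => by
      rw [hasFactorBelow_append_cons le_rfl, hasFactorBelow_iff_hasFactor (hu u hu')]
      tauto
  rwa [wordGF_false, zero_mul, add_zero,
    wordGF_congr fun u hu' => not_congr (hasFactorBelow_iff_hasFactor (hu u hu'))] at h

theorem wordGF_insert_not_hasShuffle (ht : ∀ a ∈ A, a < t) :
    wordGF (insert t A) (¬HasShuffle P Q ·) = wordGF A (¬HasShuffle P Q ·) +
      X * (wordGF A (¬HasFactor P ·) * wordGF (insert t A) (¬HasShuffle P Q ·) +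
        wordGF A (fun u => HasFactor P u ∧ ¬HasShuffle P Q u) *
          wordGF (insert t A) (¬HasFactorBelow Q t ·)) := by
  refine wordGF_insert (fun h => (ht t h).false) (fun _ h h' => h h'.1) fun u v hu hv => ?_
  have hv' : ∀ c ∈ v, c ≤ t := fun c hc => by
    rcases Finset.mem_insert.1 (hv c hc) with rfl | hc
    · exact le_rfl
    · exact (ht c hc).le
  rw [hasShuffle_append_cons (fun c hc => ht c (hu c hc)) hv']
  have := HasShuffle.hasFactor_left (P := P) (Q := Q) (w := u)
  have := HasShuffle.hasFactorBelow_right (P := P) (Q := Q) hv'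
  tauto

theorem one_sub_mul_wordGF_insert_not_hasShuffle (ht : ∀ a ∈ A, a < t) :
    (1 - X * wordGF A (¬HasFactor P ·)) * (1 - X * wordGF A (¬HasFactor Q ·)) *
        wordGF (insert t A) (¬HasShuffle P Q ·) =
      wordGF A (¬HasShuffle P Q ·) -
        X * wordGF A (¬HasFactor P ·) * wordGF A (¬HasFactor Q ·) := by
  have hS : wordGF A (¬HasShuffle P Q ·) =
      wordGF A (¬HasFactor P ·) + wordGF A (fun u => HasFactor P u ∧ ¬HasShuffle P Q u) := by
    rw [← wordGF_or fun _ h h' => h h'.1]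
    refine wordGF_congr fun u _ => ?_
    have := HasShuffle.hasFactor_left (P := P) (Q := Q) (w := u)
    tauto
  linear_combination (1 - X * wordGF A (¬HasFactor Q ·)) * wordGF_insert_not_hasShuffle P Q ht +
    X * wordGF A (fun u => HasFactor P u ∧ ¬HasShuffle P Q u) *
      wordGF_insert_not_hasFactorBelow Q ht -
    X * wordGF A (¬HasFactor Q ·) * hS

end Preorder

theorem wordGF_not_hasShuffle_comm [LinearOrder α] (A : Finset α) :
    wordGF A (¬HasShuffle P Q ·) = wordGF A (¬HasShuffle Q P ·) := by
  induction A using Finset.induction_on_max with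
  | empty =>
    refine wordGF_congr fun w hw => iff_of_true ?_ ?_ <;>
    · rintro ⟨u, m, v, rfl, -⟩
      exact notMem_empty m (hw m (by simp))
  | insert t A ht ih =>
    have hunit : IsUnit
        ((1 - X * wordGF A (¬HasFactor P ·)) * (1 - X * wordGF A (¬HasFactor Q ·))) := by
      simp [isUnit_iff_constantCoeff]
    apply hunit.mul_left_cancel
    rw [one_sub_mul_wordGF_insert_not_hasShuffle P Q ht, mul_comm (1 - _),
      one_sub_mul_wordGF_insert_not_hasShuffle Q P ht, ih]
    ring

end Shuffle

section Transfer

open List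

variable {m₁ r₁ m₂ r₂ n k : ℕ} {τ : Fin m₁ → Fin r₁} {ν : Fin m₂ → Fin r₂} {σ : Fin n → Fin k}

theorem hasShuffle_ofFn_of_containsShuffle (h : ContainsShuffle τ ν σ) :
    HasShuffle (IsOccurrence τ) (IsOccurrence ν) (ofFn σ) := by
  obtain ⟨i, pp, q, hp, hi, hpq, hq, ⟨hi', hτ⟩, ⟨hq', hν⟩, hbig⟩ := h
  refine ⟨(ofFn σ).take pp, σ ⟨pp, hp⟩, (ofFn σ).drop (pp + 1), ?_,
    ⟨ofFn fun a : Fin m₁ => σ ⟨i + a, by omega⟩, ?_, ⟨_, rfl, hτ⟩, ?_⟩,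
    ⟨ofFn fun a : Fin m₂ => σ ⟨q + a, by omega⟩, ?_, ⟨_, rfl, hν⟩, ?_⟩⟩
  · rw [← List.getElem_ofFn (f := σ) (h := by simpa using hp), getElem_cons_drop,
      take_append_drop]
  · refine infix_iff_getElem?.2 ⟨i, by simp; omega, fun a ha => ?_⟩
    simp only [length_ofFn] at ha
    simp [getElem?_take, Nat.add_comm]
    omega
  · simp only [mem_ofFn]
    rintro _ ⟨a, rfl⟩
    exact hbig _ _ (.inl ⟨by omega, by omega⟩)
  · refine infix_iff_getElem?.2 ⟨q - (pp + 1), by simp; omega, fun a ha => ?_⟩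
    simp only [length_ofFn] at ha
    simp [List.getElem?_ofFn]
    exact ⟨by omega, congrArg σ (Fin.ext (by dsimp; omega))⟩
  · simp only [mem_ofFn]
    rintro _ ⟨a, rfl⟩
    exact hbig _ _ (.inr ⟨by omega, by omega⟩)

theorem containsShuffle_of_hasShuffle_ofFn
    (h : HasShuffle (IsOccurrence τ) (IsOccurrence ν) (ofFn σ)) : ContainsShuffle τ ν σ := by
  obtain ⟨u, m, v, hs, ⟨_, hxu, ⟨f, rfl, hf⟩, hfm⟩, ⟨_, hyv, ⟨g, rfl, hg⟩, hgm⟩⟩ := h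
  obtain ⟨i, hi, hfi⟩ := infix_iff_getElem?.1 hxu
  obtain ⟨j, hj, hgj⟩ := infix_iff_getElem?.1 hyv
  simp only [length_ofFn] at hi hj
  have hn : n = u.length + 1 + v.length := by
    have := congrArg length hs
    simp only [length_ofFn, length_append, length_cons] at this
    omega
  have hσ : ∀ r (hr : r < n), (u ++ m :: v)[r]? = some (σ ⟨r, hr⟩) := fun r hr => by
    simp [← hs, hr]
  have hf' : ∀ a : Fin m₁, σ ⟨i + a, by omega⟩ = f a := fun a => by
    have := hσ (a + i) (by omega)
    rw [getElem?_append_left (by omega), hfi a (by simp)] at this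
    simpa [show i + a = a + i by omega] using this.symm
  have hm : σ ⟨u.length, by omega⟩ = m := by simpa using (hσ u.length (by omega)).symm
  have hg' : ∀ a : Fin m₂, σ ⟨u.length + 1 + j + a, by omega⟩ = g a := fun a => by
    have := hσ (u.length + 1 + (a + j)) (by omega)
    rw [getElem?_append_right (by omega),
      show u.length + 1 + (a + j) - u.length = a + j + 1 by omega, getElem?_cons_succ,
      hgj a (by simp)] at this
    simpa [show u.length + 1 + j + a = u.length + 1 + (a + j) by omega] using this.symm
  refine ⟨i, u.length, u.length + 1 + j, by omega, by omega, by omega, by omega,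
    ⟨by omega, fun a b => by rw [hf', hf']; exact hf a b⟩,
    ⟨by omega, fun a b => by rw [hg', hg']; exact hg a b⟩, ?_⟩
  rintro r hr (⟨h₁, h₂⟩ | ⟨h₁, h₂⟩)
  · obtain ⟨a, rfl⟩ : ∃ a : Fin m₁, r = i + a := ⟨⟨r - i, by omega⟩, by simp; omega⟩
    rw [hf', hm]
    exact hfm _ (mem_ofFn.2 ⟨a, rfl⟩)
  · obtain ⟨a, rfl⟩ : ∃ a : Fin m₂, r = u.length + 1 + j + a :=
      ⟨⟨r - (u.length + 1 + j), by omega⟩, by simp; omega⟩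
    rw [hg', hm]
    exact hgm _ (mem_ofFn.2 ⟨a, rfl⟩)

theorem containsShuffle_iff_hasShuffle_ofFn :
    ContainsShuffle τ ν σ ↔ HasShuffle (IsOccurrence τ) (IsOccurrence ν) (ofFn σ) :=
  ⟨hasShuffle_ofFn_of_containsShuffle, containsShuffle_of_hasShuffle_ofFn⟩

end Transfer

theorem natCard_eq_coeff_wordGF {α : Type*} [Fintype α] [DecidableEq α] (n : ℕ)
    (R : List α → Prop) :
    (Nat.card {σ : Fin n → α // R (List.ofFn σ)} : ℤ) = coeff n (wordGF univ R) := by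
  classical
  rw [coeff_wordGF, words, Fintype.piFinset_univ, filter_image,
    card_image_of_injective _ List.ofFn_injective, Nat.card_eq_fintype_card, Fintype.card_subtype]

theorem stmt7_general (m₁ r₁ m₂ r₂ : ℕ) (τ : Fin m₁ → Fin r₁) (ν : Fin m₂ → Fin r₂)
    (n k : ℕ) :
    Nat.card {σ : Fin n → Fin k // ¬ ContainsShuffle τ ν σ} =
      Nat.card {σ : Fin n → Fin k // ¬ ContainsShuffle ν τ σ} := by
  simp_rw [containsShuffle_iff_hasShuffle_ofFn]
  have key := congrArg (coeff n) <|
    wordGF_not_hasShuffle_comm (List.IsOccurrence τ) (List.IsOccurrence ν) (univ : Finset (Fin k))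
  rw [← natCard_eq_coeff_wordGF, ← natCard_eq_coeff_wordGF] at key
  exact_mod_cast key

theorem stmt7 (m₁ r₁ m₂ r₂ : ℕ) (τ : Fin m₁ → Fin r₁) (ν : Fin m₂ → Fin r₂)
    (n k : ℕ) (hk : 1 ≤ k) :
    Nat.card {σ : Fin n → Fin k // ¬ ContainsShuffle τ ν σ} =
      Nat.card {σ : Fin n → Fin k // ¬ ContainsShuffle ν τ σ} :=
  stmt7_general m₁ r₁ m₂ r₂ τ ν n k
end

section
/- Let τ⁰ and τ¹ be subword patterns and let f₁, f₂ each be a trivial bijection (one of: identity, reverse, complement, or reverse composed with complement). Then for every n ≥ 0 and k ≥ 1, the number of k-ary words of length n avoiding the multi-pattern τ⁰-τ¹ equals the number of k-ary words of length n avoiding the multi-pattern f₁(τ⁰)-f₂(τ¹). -/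
/-- `σ` contains the multi-pattern `τ⁰-τ¹`: an occurrence of `τ⁰` at `i₀` followed
(disjointly) by an occurrence of `τ¹` at `i₁`. -/
def ContainsMulti2 {m₀ r₀ m₁ r₁ n k : ℕ} (τ₀ : Fin m₀ → Fin r₀) (τ₁ : Fin m₁ → Fin r₁)
    (σ : Fin n → Fin k) : Prop :=
  ∃ i₀ i₁ : ℕ, i₀ + m₀ ≤ i₁ ∧ OccursAt τ₀ σ i₀ ∧ OccursAt τ₁ σ i₁

namespace Stmt9Aux

variable {k : ℕ}

lemma occursAt_congr {m l n n' : ℕ} {p : Fin m → Fin l} {σ : Fin n → Fin k}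
    {σ' : Fin n' → Fin k} {i i' : ℕ} (g : Equiv.Perm (Fin m))
    (h : i + m ≤ n) (h' : i' + m ≤ n')
    (hlet : ∀ a : Fin m, σ ⟨i + (g a : Fin m), by have := (g a).isLt; omega⟩
      = σ' ⟨i' + (a : Fin m), by have := a.isLt; omega⟩) :
    OccursAt p σ i ↔ OccursAt (p ∘ g) σ' i' := by
  constructor
  · rintro ⟨h₀, hs⟩
    refine ⟨h', fun a b => ?_⟩
    have key := hs (g a) (g b)
    rw [hlet a, hlet b] at key
    exact key
  · rintro ⟨h₀, hs⟩
    refine ⟨h, fun a b => ?_⟩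
    have key := hs (g.symm a) (g.symm b)
    rw [← hlet (g.symm a), ← hlet (g.symm b)] at key
    simpa using key

end Stmt9Aux

namespace Stmt9Aux

def prefW {k n : ℕ} (e : ℕ) (he : e ≤ n) (σ : Fin n → Fin k) : Fin e → Fin k :=
  fun a => σ ⟨a, by have := a.isLt; omega⟩

def sufW {k n : ℕ} (e : ℕ) (σ : Fin n → Fin k) : Fin (n - e) → Fin k :=
  fun a => σ ⟨e + a, by have := a.isLt; omega⟩

def glueW {k n : ℕ} (e : ℕ) (w : Fin e → Fin k) (s : Fin (n - e) → Fin k) : Fin n → Fin k :=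
  fun a => if h : (a : ℕ) < e then w ⟨a, h⟩ else s ⟨(a : ℕ) - e, by have := a.isLt; omega⟩

lemma occursAt_prefW {k m l n e : ℕ} (he : e ≤ n) {p : Fin m → Fin l} {σ : Fin n → Fin k}
    {i : ℕ} (h : i + m ≤ e) :
    OccursAt p (prefW e he σ) i ↔ OccursAt p σ i := by
  have key := occursAt_congr (p := p) (σ := prefW e he σ) (σ' := σ) (Equiv.refl _)
    h (h.trans he) (fun a => rfl)
  simpa using key

lemma occursAt_sufW {k m l n e : ℕ} (he : e ≤ n) {p : Fin m → Fin l} {σ : Fin n → Fin k}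
    {t : ℕ} (h : t + m ≤ n - e) :
    OccursAt p (sufW e σ) t ↔ OccursAt p σ (e + t) := by
  have key := occursAt_congr (p := p) (σ := sufW e σ) (σ' := σ) (Equiv.refl _)
    h (show e + t + m ≤ n by omega) (fun a => by
      show σ _ = σ _
      congr 1
      ext
      show e + (t + (a : ℕ)) = e + t + (a : ℕ)
      omega)
  simpa using key

lemma prefW_glueW {k n e : ℕ} (he : e ≤ n) (w : Fin e → Fin k) (s : Fin (n - e) → Fin k) :
    prefW e he (glueW e w s) = w := by
  funext a
  simp only [prefW, glueW, a.isLt, dif_pos]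

lemma sufW_glueW {k n e : ℕ} (he : e ≤ n) (w : Fin e → Fin k) (s : Fin (n - e) → Fin k) :
    sufW e (glueW e w s) = s := by
  funext a
  have ha := a.isLt
  simp only [sufW, glueW]
  rw [dif_neg (by omega)]
  congr 1
  ext
  show e + (a : ℕ) - e = (a : ℕ)
  omega

lemma glueW_eta {k n e : ℕ} (he : e ≤ n) (σ : Fin n → Fin k) :
    glueW e (prefW e he σ) (sufW e σ) = σ := by
  funext a
  by_cases h : (a : ℕ) < e
  · simp only [glueW, prefW, dif_pos h]
  · simp only [glueW, sufW, dif_neg h]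
    congr 1
    ext
    show e + ((a : ℕ) - e) = (a : ℕ)
    omega

end Stmt9Aux

namespace Stmt9Aux

lemma occursAt_compl_iff {k m l n : ℕ} {p : Fin m → Fin l} {σ : Fin n → Fin k} {i : ℕ} :
    OccursAt (PatCompl p) σ i ↔ OccursAt p (fun a => (σ a).rev) i := by
  constructor <;> rintro ⟨h, hs⟩ <;> refine ⟨h, fun a b => ?_⟩
  · have key := hs b a
    simp only [PatCompl] at key
    rw [Fin.rev_lt_rev] at key
    rw [Fin.rev_lt_rev]
    exact key
  · have key := hs b a
    rw [Fin.rev_lt_rev] at key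
    simp only [PatCompl]
    rw [Fin.rev_lt_rev]
    exact key

lemma avoids_compl_iff {k m l n : ℕ} (p : Fin m → Fin l) (σ : Fin n → Fin k) :
    AvoidsPat (PatCompl p) σ ↔ AvoidsPat p (fun a => (σ a).rev) := by
  constructor
  · intro hav i hocc
    exact hav i (occursAt_compl_iff.mpr hocc)
  · intro hav i hocc
    exact hav i (occursAt_compl_iff.mp hocc)

lemma occursAt_rev {k m l n : ℕ} (p : Fin m → Fin l) (σ : Fin n → Fin k) (i : ℕ)
    (h : i + m ≤ n) :
    OccursAt p (σ ∘ Fin.rev) i ↔ OccursAt (PatRev p) σ (n - m - i) := by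
  have key := occursAt_congr (p := p) (σ := σ ∘ Fin.rev) (σ' := σ) (i := i) (i' := n - m - i)
    Fin.revPerm h (show n - m - i + m ≤ n by omega) (fun a => by
      have ha := a.isLt
      show σ _ = σ _
      congr 1
      ext
      simp only [Fin.val_rev, Fin.revPerm_apply]
      omega)
  rw [show p ∘ ⇑(Fin.revPerm) = PatRev p from rfl] at key
  exact key

end Stmt9Aux

namespace Stmt9Aux

lemma avoids_rev_iff {k m l n : ℕ} (p : Fin m → Fin l) (σ : Fin n → Fin k) :
    AvoidsPat (PatRev p) σ ↔ AvoidsPat p (σ ∘ Fin.rev) := by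
  have hRR : PatRev (PatRev p) = p := by
    funext a; simp [PatRev, Fin.rev_rev]
  have hσσ : (σ ∘ Fin.rev) ∘ Fin.rev = σ := by
    funext a; simp [Function.comp, Fin.rev_rev]
  constructor
  · intro hav i hocc
    obtain ⟨h, hs⟩ := hocc
    exact hav _ ((occursAt_rev p σ i h).mp ⟨h, hs⟩)
  · intro hav i hocc
    obtain ⟨h, hs⟩ := hocc
    have key := (occursAt_rev (PatRev p) (σ ∘ Fin.rev) i (by omega)).mp
      (by rw [hσσ]; exact ⟨h, hs⟩)
    rw [hRR] at key
    exact hav _ key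

lemma card_avoids_compl {k m l : ℕ} (p : Fin m → Fin l) (n : ℕ) :
    Nat.card {σ : Fin n → Fin k // AvoidsPat (PatCompl p) σ} =
      Nat.card {σ : Fin n → Fin k // AvoidsPat p σ} := by
  apply Nat.card_congr
  exact Equiv.subtypeEquiv (Equiv.arrowCongr (Equiv.refl (Fin n)) Fin.revPerm)
    (fun σ => by
      rw [avoids_compl_iff p σ]
      constructor <;> intro hh <;> (try exact hh) <;>
        · convert hh using 2)

lemma card_avoids_rev {k m l : ℕ} (p : Fin m → Fin l) (n : ℕ) :
    Nat.card {σ : Fin n → Fin k // AvoidsPat (PatRev p) σ} =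
      Nat.card {σ : Fin n → Fin k // AvoidsPat p σ} := by
  apply Nat.card_congr
  exact Equiv.subtypeEquiv (Equiv.arrowCongr Fin.revPerm (Equiv.refl (Fin k)))
    (fun σ => by
      rw [avoids_rev_iff p σ]
      constructor <;> intro hh <;> (try exact hh) <;>
        · convert hh using 2)

end Stmt9Aux

namespace Stmt9Aux

def FirstOcc {k m l : ℕ} (x : Fin m → Fin l) (e : ℕ) (w : Fin e → Fin k) : Prop :=
  m ≤ e ∧ OccursAt x w (e - m) ∧ ∀ i, i + m < e → ¬ OccursAt x w i

variable {k m₀ r₀ m₁ r₁ : ℕ}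

lemma not_contains_of_avoids_left {n : ℕ} {x : Fin m₀ → Fin r₀} {y : Fin m₁ → Fin r₁}
    {σ : Fin n → Fin k} (h : AvoidsPat x σ) : ¬ ContainsMulti2 x y σ := by
  rintro ⟨i₀, i₁, _, h₀, _⟩
  exact h i₀ h₀

lemma not_contains_glue {n : ℕ} {x : Fin m₀ → Fin r₀} {y : Fin m₁ → Fin r₁} {e : ℕ}
    (he : e ≤ n) {w : Fin e → Fin k} {s : Fin (n - e) → Fin k}
    (hw : FirstOcc x e w) (hs : AvoidsPat y s) :
    ¬ ContainsMulti2 x y (glueW e w s) := by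
  rintro ⟨i₀, i₁, hle, h₀, h₁⟩
  obtain ⟨h₁n, h₁s⟩ := h₁
  have hcase : e ≤ i₁ := by
    by_contra hlt
    have hx : OccursAt x w i₀ := by
      rw [← prefW_glueW he w s]
      exact (occursAt_prefW he (show i₀ + m₀ ≤ e by omega)).mpr h₀
    exact hw.2.2 i₀ (by omega) hx
  have hy : OccursAt y s (i₁ - e) := by
    rw [← sufW_glueW he w s]
    refine (occursAt_sufW he (by omega)).mpr ?_
    rw [show e + (i₁ - e) = i₁ by omega]
    exact ⟨h₁n, h₁s⟩
  exact hs _ hy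

def recompose (x : Fin m₀ → Fin r₀) (y : Fin m₁ → Fin r₁) (n : ℕ) :
    ({σ : Fin n → Fin k // AvoidsPat x σ} ⊕
      (Σ e : Fin (n + 1), {w : Fin (e : ℕ) → Fin k // FirstOcc x (e : ℕ) w} ×
        {s : Fin (n - (e : ℕ)) → Fin k // AvoidsPat y s})) →
      {σ : Fin n → Fin k // ¬ ContainsMulti2 x y σ} := fun z =>
  match z with
  | Sum.inl σ => ⟨σ.1, not_contains_of_avoids_left σ.2⟩
  | Sum.inr ⟨e, w, s⟩ => ⟨glueW (e : ℕ) w.1 s.1,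
      not_contains_glue (by have := e.isLt; omega) w.2 s.2⟩

end Stmt9Aux

namespace Stmt9Aux

variable {k m₀ r₀ m₁ r₁ : ℕ}

lemma glue_has_occ {n e : ℕ} (he : e ≤ n) {x : Fin m₀ → Fin r₀}
    {w : Fin e → Fin k} (hw : FirstOcc x e w) (s : Fin (n - e) → Fin k) :
    OccursAt x (glueW e w s) (e - m₀) := by
  have hm := hw.1
  rw [← occursAt_prefW he (show e - m₀ + m₀ ≤ e by omega), prefW_glueW he w s]
  exact hw.2.1

lemma recompose_injective (x : Fin m₀ → Fin r₀) (y : Fin m₁ → Fin r₁) (n : ℕ) :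
    Function.Injective (recompose (k := k) x y n) := by
  have hfirst : ∀ (e₁ e₂ : ℕ) (he₁ : e₁ ≤ n) (he₂ : e₂ ≤ n)
      (w₁ : Fin e₁ → Fin k) (s₁ : Fin (n - e₁) → Fin k)
      (w₂ : Fin e₂ → Fin k) (s₂ : Fin (n - e₂) → Fin k),
      FirstOcc x e₁ w₁ → FirstOcc x e₂ w₂ →
      glueW e₁ w₁ s₁ = glueW e₂ w₂ s₂ → ¬ (e₁ < e₂) := by
    intro e₁ e₂ he₁ he₂ w₁ s₁ w₂ s₂ hw₁ hw₂ hg hlt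
    have hm := hw₁.1
    have hocc : OccursAt x (glueW e₁ w₁ s₁) (e₁ - m₀) := glue_has_occ he₁ hw₁ s₁
    rw [hg] at hocc
    have : OccursAt x w₂ (e₁ - m₀) := by
      rw [← prefW_glueW he₂ w₂ s₂]
      exact (occursAt_prefW he₂ (show e₁ - m₀ + m₀ ≤ e₂ by omega)).mpr hocc
    exact hw₂.2.2 (e₁ - m₀) (by omega) this
  rintro (σ₁ | ⟨e₁, w₁, s₁⟩) (σ₂ | ⟨e₂, w₂, s₂⟩) hz
  · simp only [recompose, Subtype.mk.injEq] at hz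
    simp [Subtype.ext_iff, hz]
  · exfalso
    simp only [recompose, Subtype.mk.injEq] at hz
    have := glue_has_occ (k := k) (by have := e₂.isLt; omega) w₂.2 s₂.1
    rw [← hz] at this
    exact σ₁.2 _ this
  · exfalso
    simp only [recompose, Subtype.mk.injEq] at hz
    have := glue_has_occ (k := k) (by have := e₁.isLt; omega) w₁.2 s₁.1
    rw [hz] at this
    exact σ₂.2 _ this
  · simp only [recompose, Subtype.mk.injEq] at hz
    have he₁ : (e₁ : ℕ) ≤ n := by have := e₁.isLt; omega
    have he₂ : (e₂ : ℕ) ≤ n := by have := e₂.isLt; omega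
    have hee : (e₁ : ℕ) = (e₂ : ℕ) := by
      rcases Nat.lt_trichotomy (e₁ : ℕ) (e₂ : ℕ) with h | h | h
      · exact absurd h (hfirst _ _ he₁ he₂ w₁.1 s₁.1 w₂.1 s₂.1 w₁.2 w₂.2 hz)
      · exact h
      · exact absurd h (hfirst _ _ he₂ he₁ w₂.1 s₂.1 w₁.1 s₁.1 w₂.2 w₁.2 hz.symm)
    have hE : e₁ = e₂ := Fin.ext hee
    subst hE
    have hw : w₁.1 = w₂.1 := by
      rw [← prefW_glueW he₁ w₁.1 s₁.1, ← prefW_glueW he₁ w₂.1 s₂.1, hz]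
    have hs : s₁.1 = s₂.1 := by
      rw [← sufW_glueW he₁ w₁.1 s₁.1, ← sufW_glueW he₁ w₂.1 s₂.1, hz]
    congr 1
    exact Sigma.ext rfl (by simp [Prod.ext_iff, Subtype.ext_iff, hw, hs])

end Stmt9Aux

namespace Stmt9Aux

lemma recompose_surjective (x : Fin m₀ → Fin r₀) (y : Fin m₁ → Fin r₁) (n : ℕ) :
    Function.Surjective (recompose (k := k) x y n) := by
  classical
  rintro ⟨σ, hσ⟩
  by_cases h : ∃ i, OccursAt x σ i
  · obtain ⟨hn0, hs0⟩ := Nat.find_spec h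
    have hocc : OccursAt x σ (Nat.find h) := ⟨hn0, hs0⟩
    set i0 := Nat.find h with hi0
    have he : i0 + m₀ ≤ n := hn0
    have hFO : FirstOcc x (i0 + m₀) (prefW (i0 + m₀) he σ) := by
      refine ⟨by omega, ?_, ?_⟩
      · rw [show i0 + m₀ - m₀ = i0 by omega]
        exact (occursAt_prefW he (by omega)).mpr hocc
      · intro i hi hic
        have hoi : OccursAt x σ i := (occursAt_prefW he (by omega)).mp hic
        exact Nat.find_min h (by omega) hoi
    have hAv : AvoidsPat y (sufW (i0 + m₀) σ) := by
      intro t ht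
      obtain ⟨htn, hts⟩ := ht
      have hoy : OccursAt y σ (i0 + m₀ + t) := (occursAt_sufW he htn).mp ⟨htn, hts⟩
      exact hσ ⟨i0, i0 + m₀ + t, by omega, hocc, hoy⟩
    refine ⟨Sum.inr ⟨⟨i0 + m₀, by omega⟩, ⟨prefW (i0 + m₀) he σ, hFO⟩,
      ⟨sufW (i0 + m₀) σ, hAv⟩⟩, ?_⟩
    apply Subtype.ext
    exact glueW_eta he σ
  · exact ⟨Sum.inl ⟨σ, fun i hi => h ⟨i, hi⟩⟩, rfl⟩

lemma card_decomp (x : Fin m₀ → Fin r₀) (y : Fin m₁ → Fin r₁) (n : ℕ) :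
    Nat.card {σ : Fin n → Fin k // ¬ ContainsMulti2 x y σ} =
      Nat.card {σ : Fin n → Fin k // AvoidsPat x σ} +
        ∑ e : Fin (n + 1), Nat.card {w : Fin (e : ℕ) → Fin k // FirstOcc x (e : ℕ) w} *
          Nat.card {s : Fin (n - (e : ℕ)) → Fin k // AvoidsPat y s} := by
  rw [← Nat.card_eq_of_bijective _ ⟨recompose_injective x y n, recompose_surjective x y n⟩]
  rw [Nat.card_sum]
  congr 1
  haveI : ∀ e : Fin (n + 1), Fintype ({w : Fin (e : ℕ) → Fin k // FirstOcc x (e : ℕ) w} ×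
      {s : Fin (n - (e : ℕ)) → Fin k // AvoidsPat y s}) := fun e => Fintype.ofFinite _
  rw [Nat.card_eq_fintype_card, Fintype.card_sigma]
  refine Finset.sum_congr rfl (fun e _ => ?_)
  rw [← Nat.card_eq_fintype_card, Nat.card_prod]

end Stmt9Aux

namespace Stmt9Aux

variable {k m₀ r₀ : ℕ}

def extendW {k : ℕ} (e : ℕ) (v : Fin (e - 1) → Fin k) (c : Fin k) : Fin e → Fin k :=
  fun a => if h : (a : ℕ) < e - 1 then v ⟨a, h⟩ else c

lemma prefW_extendW {e : ℕ} (he : 1 ≤ e) (v : Fin (e - 1) → Fin k) (c : Fin k) :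
    prefW (e - 1) (by omega) (extendW e v c) = v := by
  funext a
  simp only [prefW, extendW, a.isLt, dif_pos]

lemma card_prefAvoid (x : Fin m₀ → Fin r₀) (e : ℕ) (he : 1 ≤ e) :
    Nat.card {w : Fin e → Fin k // AvoidsPat x (prefW (e - 1) (by omega) w)} =
      Nat.card {v : Fin (e - 1) → Fin k // AvoidsPat x v} * k := by
  have hEq : Nat.card ({v : Fin (e - 1) → Fin k // AvoidsPat x v} × Fin k) =
      Nat.card {v : Fin (e - 1) → Fin k // AvoidsPat x v} * k := by
    rw [Nat.card_prod, Nat.card_eq_fintype_card (α := Fin k), Fintype.card_fin]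
  rw [← hEq]
  apply Nat.card_congr
  refine ⟨fun w => (⟨prefW (e - 1) (by omega) w.1, w.2⟩, w.1 ⟨e - 1, by omega⟩),
    fun vc => ⟨extendW e vc.1.1 vc.2, by rw [prefW_extendW he]; exact vc.1.2⟩, ?_, ?_⟩
  · intro w
    apply Subtype.ext
    funext a
    simp only [extendW, prefW]
    split
    · rfl
    · have ha := a.isLt
      have hae : (⟨e - 1, by omega⟩ : Fin e) = a := Fin.ext (by simp; omega)
      rw [hae]
  · intro vc
    refine Prod.ext (Subtype.ext ?_) ?_
    · exact prefW_extendW he vc.1.1 vc.2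
    · show extendW e vc.1.1 vc.2 ⟨e - 1, _⟩ = vc.2
      simp only [extendW]
      rw [dif_neg (by omega)]

lemma prefAvoid_iff_split (x : Fin m₀ → Fin r₀) (e : ℕ) (he : 1 ≤ e) (w : Fin e → Fin k) :
    AvoidsPat x (prefW (e - 1) (by omega) w) ↔ (FirstOcc x e w ∨ AvoidsPat x w) := by
  have htrans : ∀ j, j + m₀ ≤ e - 1 →
      (OccursAt x (prefW (e - 1) (show e - 1 ≤ e by omega) w) j ↔ OccursAt x w j) :=
    fun j hj => occursAt_prefW (show e - 1 ≤ e by omega) hj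
  constructor
  · intro h
    by_cases hc : ∃ i, OccursAt x w i
    · left
      obtain ⟨i, hi⟩ := hc
      have hmin : ∀ j, j + m₀ < e → ¬ OccursAt x w j := by
        intro j hj hoj
        exact h j ((htrans j (by omega)).mpr hoj)
      obtain ⟨hie, his⟩ := hi
      have hieq : i + m₀ = e := by
        by_contra hne
        exact hmin i (by omega) ⟨hie, his⟩
      refine ⟨by omega, ?_, hmin⟩
      rw [show e - m₀ = i by omega]
      exact ⟨hie, his⟩
    · right
      exact fun i hi => hc ⟨i, hi⟩
  · rintro (⟨hme, hocc, hmin⟩ | hav) <;> intro j hj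
    · obtain ⟨hje, hjs⟩ := hj
      exact hmin j (by omega) ((htrans j hje).mp ⟨hje, hjs⟩)
    · obtain ⟨hje, hjs⟩ := hj
      exact hav j ((htrans j hje).mp ⟨hje, hjs⟩)

lemma card_split (x : Fin m₀ → Fin r₀) (e : ℕ) (he : 1 ≤ e) :
    Nat.card {w : Fin e → Fin k // AvoidsPat x (prefW (e - 1) (by omega) w)} =
      Nat.card {w : Fin e → Fin k // FirstOcc x e w} +
        Nat.card {w : Fin e → Fin k // AvoidsPat x w} := by
  classical
  have hdisj : Disjoint (fun w : Fin e → Fin k => FirstOcc x e w)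
      (fun w : Fin e → Fin k => AvoidsPat x w) := by
    rw [Pi.disjoint_iff]
    intro w
    rw [Prop.disjoint_iff]
    rintro ⟨⟨hme, hocc, -⟩, hav⟩
    exact hav _ hocc
  rw [Nat.card_congr (Equiv.subtypeEquivRight (prefAvoid_iff_split x e he)),
    Nat.card_congr (subtypeOrEquiv _ _ hdisj), Nat.card_sum]

end Stmt9Aux

namespace Stmt9Aux

variable {k m₀ r₀ m₁ r₁ : ℕ}

lemma card_avoids_triv {m l : ℕ} (f : (Fin m → Fin l) → (Fin m → Fin l))
    (hf : f = id ∨ f = PatRev ∨ f = PatCompl ∨ f = fun p => PatRev (PatCompl p))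
    (p : Fin m → Fin l) (n : ℕ) :
    Nat.card {σ : Fin n → Fin k // AvoidsPat (f p) σ} =
      Nat.card {σ : Fin n → Fin k // AvoidsPat p σ} := by
  rcases hf with rfl | rfl | rfl | rfl
  · rfl
  · exact card_avoids_rev p n
  · exact card_avoids_compl p n
  · exact (card_avoids_rev (PatCompl p) n).trans (card_avoids_compl p n)

lemma card_firstOcc_congr (x x' : Fin m₀ → Fin r₀)
    (hAv : ∀ j : ℕ, Nat.card {v : Fin j → Fin k // AvoidsPat x' v} =
      Nat.card {v : Fin j → Fin k // AvoidsPat x v}) (e : ℕ) :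
    Nat.card {w : Fin e → Fin k // FirstOcc x' e w} =
      Nat.card {w : Fin e → Fin k // FirstOcc x e w} := by
  rcases Nat.eq_zero_or_pos e with rfl | he
  · apply Nat.card_congr
    apply Equiv.subtypeEquivRight
    intro w
    constructor <;> rintro ⟨hm, hocc, hmin⟩ <;>
      exact ⟨hm, ⟨by omega, fun a b => absurd a.isLt (by omega)⟩, fun i hi => by omega⟩
  · have h1 := card_split (k := k) x e he
    have h2 := card_split (k := k) x' e he
    have h3 := card_prefAvoid (k := k) x e he
    have h4 := card_prefAvoid (k := k) x' e he
    have h5 := hAv (e - 1)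
    have h6 := hAv e
    rw [h5] at h4
    omega

end Stmt9Aux


theorem stmt9 (m₀ r₀ m₁ r₁ : ℕ) (τ₀ : Fin m₀ → Fin r₀) (τ₁ : Fin m₁ → Fin r₁)
    (f₁ : (Fin m₀ → Fin r₀) → (Fin m₀ → Fin r₀))
    (f₂ : (Fin m₁ → Fin r₁) → (Fin m₁ → Fin r₁))
    (hf₁ : IsTrivialBij f₁) (hf₂ : IsTrivialBij f₂)
    (n k : ℕ) (hk : 1 ≤ k) :
    Nat.card {σ : Fin n → Fin k // ¬ ContainsMulti2 τ₀ τ₁ σ} =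
      Nat.card {σ : Fin n → Fin k // ¬ ContainsMulti2 (f₁ τ₀) (f₂ τ₁) σ} := by
  rw [Stmt9Aux.card_decomp τ₀ τ₁ n, Stmt9Aux.card_decomp (f₁ τ₀) (f₂ τ₁) n]
  have hx : ∀ j : ℕ, Nat.card {v : Fin j → Fin k // AvoidsPat (f₁ τ₀) v} =
      Nat.card {v : Fin j → Fin k // AvoidsPat τ₀ v} :=
    fun j => Stmt9Aux.card_avoids_triv f₁ hf₁ τ₀ j
  have hy : ∀ j : ℕ, Nat.card {v : Fin j → Fin k // AvoidsPat (f₂ τ₁) v} =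
      Nat.card {v : Fin j → Fin k // AvoidsPat τ₁ v} :=
    fun j => Stmt9Aux.card_avoids_triv f₂ hf₂ τ₁ j
  congr 1
  · exact (hx n).symm
  · refine Finset.sum_congr rfl (fun e _ => ?_)
    rw [Stmt9Aux.card_firstOcc_congr τ₀ (f₁ τ₀) hx (e : ℕ), hy (n - (e : ℕ))]
end

section
/- Let τ⁰ and τ¹ be subword patterns. Then for every n ≥ 0 and k ≥ 1, the number of k-ary words of length n avoiding the multi-pattern τ⁰-τ¹ equals the number of k-ary words of length n avoiding the multi-pattern τ¹-τ⁰. -/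
section helpers
variable {n k : ℕ}

lemma fin_congr (σ : Fin n → Fin k) {a b : ℕ} (ha : a < n) (hb : b < n)
    (hab : a = b) : σ ⟨a, ha⟩ = σ ⟨b, hb⟩ := by subst hab; rfl

lemma occ_congr {m l : ℕ} (p : Fin m → Fin l) {σ τ : Fin n → Fin k} {i j : ℕ}
    (hi : i + m ≤ n) (hj : j + m ≤ n)
    (hag : ∀ a : Fin m, σ ⟨i + a, by have := a.isLt; omega⟩ = τ ⟨j + a, by have := a.isLt; omega⟩) :
    OccursAt p σ i ↔ OccursAt p τ j := by
  constructor
  · rintro ⟨h, hh⟩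
    refine ⟨hj, fun a b => ?_⟩
    rw [← hag a, ← hag b]
    exact hh a b
  · rintro ⟨h, hh⟩
    refine ⟨hi, fun a b => ?_⟩
    rw [hag a, hag b]
    exact hh a b

def sw (e L : ℕ) (h : e + L ≤ n) (σ : Fin n → Fin k) : Fin n → Fin k :=
  fun x => if hx : (x : ℕ) < L then σ ⟨(x : ℕ) + e, by omega⟩
    else if (x : ℕ) < e + L then σ ⟨(x : ℕ) - L, by have := x.isLt; omega⟩ else σ x

lemma sw_lo (e L : ℕ) (h : e + L ≤ n) (σ : Fin n → Fin k) (x : ℕ) (hxn : x < n)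
    (hx : x < L) : sw e L h σ ⟨x, hxn⟩ = σ ⟨x + e, by omega⟩ := dif_pos hx

lemma sw_mid (e L : ℕ) (h : e + L ≤ n) (σ : Fin n → Fin k) (x : ℕ) (hxn : x < n)
    (hx1 : L ≤ x) (hx2 : x < e + L) : sw e L h σ ⟨x, hxn⟩ = σ ⟨x - L, by omega⟩ := by
  simp only [sw]
  rw [dif_neg (by omega)]
  exact if_pos hx2

lemma sw_hi (e L : ℕ) (h : e + L ≤ n) (σ : Fin n → Fin k) (x : ℕ) (hxn : x < n)
    (hx : e + L ≤ x) : sw e L h σ ⟨x, hxn⟩ = σ ⟨x, hxn⟩ := by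
  simp only [sw]
  rw [dif_neg (by omega)]
  exact if_neg (by omega)

lemma sw_sw (e L : ℕ) (h1 : e + L ≤ n) (h2 : L + e ≤ n) (σ : Fin n → Fin k) :
    sw L e h2 (sw e L h1 σ) = σ := by
  funext x
  obtain ⟨x, hxn⟩ := x
  rcases lt_or_ge x e with hx | hx
  · rw [sw_lo L e h2 _ x hxn hx, sw_mid e L h1 σ _ (by omega) (by omega) (by omega)]
    exact fin_congr σ _ _ (by omega)
  · rcases lt_or_ge x (L + e) with hx2 | hx2
    · rw [sw_mid L e h2 _ x hxn hx hx2, sw_lo e L h1 σ _ (by omega) (by omega)]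
      exact fin_congr σ _ _ (by omega)
    · rw [sw_hi L e h2 _ x hxn hx2, sw_hi e L h1 σ _ hxn (by omega)]

end helpers

section marked
variable {n k : ℕ} {mp lp mq lq : ℕ}

def Marked (p : Fin mp → Fin lp) (q : Fin mq → Fin lq) (σ : Fin n → Fin k)
    (i j : ℕ) : Prop :=
  OccursAt p σ i ∧ (∀ i', i' < i → ¬ OccursAt p σ i') ∧ i + mp ≤ j ∧ OccursAt q σ j ∧
    (∀ j', i + mp ≤ j' → j' < j → ¬ OccursAt q σ j')

lemma marked_contains {p : Fin mp → Fin lp} {q : Fin mq → Fin lq} {σ : Fin n → Fin k}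
    {i j : ℕ} (h : Marked p q σ i j) : ContainsMulti2 p q σ :=
  ⟨i, j, h.2.2.1, h.1, h.2.2.2.1⟩

lemma contains_marked {p : Fin mp → Fin lp} {q : Fin mq → Fin lq} {σ : Fin n → Fin k}
    (h : ContainsMulti2 p q σ) : ∃ i j, Marked p q σ i j := by
  classical
  obtain ⟨i₀, i₁, hle, h₀, h₁⟩ := h
  have he : ∃ i, OccursAt p σ i := ⟨i₀, h₀⟩
  have hile : Nat.find he ≤ i₀ := Nat.find_min' he h₀
  have he2 : ∃ j, Nat.find he + mp ≤ j ∧ OccursAt q σ j := ⟨i₁, by omega, h₁⟩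
  refine ⟨Nat.find he, Nat.find he2, Nat.find_spec he, fun i' hlt => Nat.find_min he hlt,
    (Nat.find_spec he2).1, (Nat.find_spec he2).2, fun j' h1 h2 hocc => ?_⟩
  exact Nat.find_min he2 h2 ⟨h1, hocc⟩

lemma marked_unique {p : Fin mp → Fin lp} {q : Fin mq → Fin lq} {σ : Fin n → Fin k}
    {i j i' j' : ℕ} (h : Marked p q σ i j) (h' : Marked p q σ i' j') : i = i' ∧ j = j' := by
  obtain ⟨hp, hpm, hej, hq, hqm⟩ := h
  obtain ⟨hp', hpm', hej', hq', hqm'⟩ := h'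
  have hi : i = i' := by
    rcases lt_trichotomy i i' with hc | hc | hc
    · exact absurd hp (hpm' i hc)
    · exact hc
    · exact absurd hp' (hpm i' hc)
  subst hi
  rcases lt_trichotomy j j' with hc | hc | hc
  · exact absurd hq (hqm' j hej hc)
  · exact ⟨rfl, hc⟩
  · exact absurd hq' (hqm j' hej' hc)

lemma marked_bound {p : Fin mp → Fin lp} {q : Fin mq → Fin lq} {σ : Fin n → Fin k}
    {i j : ℕ} (h : Marked p q σ i j) : (i + mp) + (j + mq - (i + mp)) ≤ n := by
  have h1 := h.2.2.2.1.1
  have h2 := h.2.2.1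
  omega

lemma swap_marked {p : Fin mp → Fin lp} {q : Fin mq → Fin lq} {σ : Fin n → Fin k}
    {i j : ℕ} (hm : Marked p q σ i j) :
    Marked q p (sw (i + mp) (j + mq - (i + mp)) (marked_bound hm) σ)
      (j - (i + mp)) ((j + mq - (i + mp)) + i) := by
  have hp := hm.1
  have hpmin := hm.2.1
  have hej := hm.2.2.1
  have hq := hm.2.2.2.1
  have hqmin := hm.2.2.2.2
  have hqn : j + mq ≤ n := hq.1
  have hpn : i + mp ≤ n := hp.1
  set e := i + mp with he
  set L := j + mq - e with hL
  set σ' := sw e L (marked_bound hm) σ with hσ'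
  refine ⟨?_, ?_, by omega, ?_, ?_⟩
  · -- OccursAt q σ' (j - e)
    refine (occ_congr q (i := j) (j := j - e) hqn (by omega) ?_).mp hq
    intro a
    have ha := a.isLt
    rw [hσ', sw_lo e L _ σ _ _ (by omega)]
    exact fin_congr σ _ _ (by omega)
  · -- minimality for q
    intro i' hlt hocc
    have hb : i' + mq ≤ n := hocc.1
    have : OccursAt q σ (e + i') := by
      refine (occ_congr q (i := i') (j := e + i') hb (by omega) ?_).mp hocc
      intro a
      have ha := a.isLt
      rw [hσ', sw_lo e L _ σ _ _ (by omega)]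
      exact fin_congr σ _ _ (by omega)
    exact hqmin (e + i') (by omega) (by omega) this
  · -- OccursAt p σ' (L + i)
    refine (occ_congr p (i := i) (j := L + i) hpn (by omega) ?_).mp hp
    intro a
    have ha := a.isLt
    rw [hσ', sw_mid e L _ σ _ _ (by omega) (by omega)]
    exact fin_congr σ _ _ (by omega)
  · -- minimality for p
    intro j' hge hlt hocc
    have hb : j' + mp ≤ n := hocc.1
    have hLj : L ≤ j' := by omega
    have : OccursAt p σ (j' - L) := by
      refine (occ_congr p (i := j') (j := j' - L) hb (by omega) ?_).mp hocc
      intro a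
      have ha := a.isLt
      rw [hσ', sw_mid e L _ σ _ _ (by omega) (by omega)]
      exact fin_congr σ _ _ (by omega)
    exact hpmin (j' - L) (by omega) this

end marked

section equivs
variable {n k : ℕ} {mp lp mq lq : ℕ}

def MarkedSet (p : Fin mp → Fin lp) (q : Fin mq → Fin lq) (n k : ℕ) :=
  {x : (Fin n → Fin k) × ℕ × ℕ // Marked p q x.1 x.2.1 x.2.2}

def Fswap (p : Fin mp → Fin lp) (q : Fin mq → Fin lq) (x : MarkedSet p q n k) :
    MarkedSet q p n k :=
  ⟨(sw (x.1.2.1 + mp) (x.1.2.2 + mq - (x.1.2.1 + mp)) (marked_bound x.2) x.1.1,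
    x.1.2.2 - (x.1.2.1 + mp), (x.1.2.2 + mq - (x.1.2.1 + mp)) + x.1.2.1), swap_marked x.2⟩

lemma sw_congr (e e' L L' : ℕ) (he : e = e') (hL : L = L') (h : e + L ≤ n)
    (h' : e' + L' ≤ n) (σ : Fin n → Fin k) : sw e L h σ = sw e' L' h' σ := by
  subst he; subst hL; rfl

lemma Fswap_invol (p : Fin mp → Fin lp) (q : Fin mq → Fin lq) (x : MarkedSet p q n k) :
    Fswap q p (Fswap p q x) = x := by
  obtain ⟨⟨σ, i, j⟩, hm⟩ := x
  have hej : i + mp ≤ j := hm.2.2.1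
  have hqn : j + mq ≤ n := hm.2.2.2.1.1
  apply Subtype.ext
  simp only [Fswap]
  have h1 : j - (i + mp) + mq = j + mq - (i + mp) := by omega
  have h2 : j + mq - (i + mp) + i + mp - (j - (i + mp) + mq) = i + mp := by omega
  have h3 : j + mq - (i + mp) + i + mp - (j - (i + mp) + mq) + (j - (i + mp)) = j := by omega
  have h4 : j + mq - (i + mp) + i - (j - (i + mp) + mq) = i := by omega
  refine Prod.ext ?_ (Prod.ext ?_ ?_)
  · have hA := marked_bound hm
    have hB : (j + mq - (i + mp)) + (i + mp) ≤ n := by omega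
    exact Eq.trans (sw_congr _ _ _ _ h1 h2 (by omega) hB _) (sw_sw _ _ hA hB σ)
  · exact h4
  · exact h3

noncomputable def eqvContains (p : Fin mp → Fin lp) (q : Fin mq → Fin lq) :
    {σ : Fin n → Fin k // ContainsMulti2 p q σ} ≃ MarkedSet p q n k where
  toFun s := ⟨(s.1, (contains_marked s.2).choose, (contains_marked s.2).choose_spec.choose),
    (contains_marked s.2).choose_spec.choose_spec⟩
  invFun x := ⟨x.1.1, marked_contains x.2⟩
  left_inv s := rfl
  right_inv x := by
    obtain ⟨⟨σ, i, j⟩, hm⟩ := x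
    apply Subtype.ext
    have hu := marked_unique
      (contains_marked (marked_contains hm)).choose_spec.choose_spec hm
    exact Prod.ext rfl (Prod.ext hu.1 hu.2)

def eqvSwap (p : Fin mp → Fin lp) (q : Fin mq → Fin lq) :
    MarkedSet p q n k ≃ MarkedSet q p n k :=
  ⟨Fswap p q, Fswap q p, Fswap_invol p q, Fswap_invol q p⟩

end equivs

theorem stmt10 (m₀ r₀ m₁ r₁ : ℕ) (τ₀ : Fin m₀ → Fin r₀) (τ₁ : Fin m₁ → Fin r₁)
    (n k : ℕ) (hk : 1 ≤ k) :
    Nat.card {σ : Fin n → Fin k // ¬ ContainsMulti2 τ₀ τ₁ σ} =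
      Nat.card {σ : Fin n → Fin k // ¬ ContainsMulti2 τ₁ τ₀ σ} := by
  classical
  have hc : Nat.card {σ : Fin n → Fin k // ContainsMulti2 τ₀ τ₁ σ} =
      Nat.card {σ : Fin n → Fin k // ContainsMulti2 τ₁ τ₀ σ} :=
    Nat.card_congr (((eqvContains τ₀ τ₁).trans (eqvSwap τ₀ τ₁)).trans (eqvContains τ₁ τ₀).symm)
  rw [Nat.card_eq_fintype_card, Nat.card_eq_fintype_card] at hc ⊢
  rw [Fintype.card_subtype_compl, Fintype.card_subtype_compl, hc]
end
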